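/- arXiv:1409.4322 — 10 statements merged into one kernel-verified Lean document; each statement's English description precedes it below -/
import Mathlib

section
/- Let λ > 1. Define, for x₀ > λ^{−λ}, T₊(x₀) := 2∫₀¹ (λ²(1−ξ²) − x₀^{−2/λ}(1 − ξ^{(2λ−2)/λ}))^{−1/2} dξ, and, for x₀ > 0, T₋(x₀) := 2∫₀¹ (λ²(1−ξ²) + x₀^{−2/λ}(1 − ξ^{(2λ−2)/λ}))^{−1/2} dξ. Then both integrals are finite on the stated ranges; T₊ is strictly decreasing on (λ^{−λ}, ∞) with lim_{x₀ → (λ^{−λ})⁺} T₊(x₀) = π and lim_{x₀ → ∞} T₊(x₀) = π/λ; and T₋ is strictly increasing on (0, ∞) with lim_{x₀ → 0⁺} T₋(x₀) = 0 and lim_{x₀ → ∞} T₋(x₀) = π/λ. -/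
/-!
Write `G_c(ξ) = (λ²(1 - ξ²) - c (1 - ξ^{(2λ-2)/λ}))^{-1/2}`, so that `T₊(x₀) = 2 ∫₀¹ G_c` with
`c = x₀^{-2/λ}` and `T₋(x₀) = 2 ∫₀¹ G_c` with `c = -x₀^{-2/λ}`; the range `x₀ > λ^{-λ}` of `T₊`
is `c < λ²`. For `ξ ∈ (0, 1)` the radicand is strictly decreasing in `c`, so on `c ≤ λ²` the
integrand `G_c` is strictly increasing in `c` and dominated by `G_{λ²}`. The substitution
`ξ = sin^λ θ` turns `G_{λ²}(ξ) dξ` into `dθ`, so `G_{λ²}` is integrable with integral `π/2`, and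
`ξ = sin θ` gives `∫₀¹ G₀ = π/(2λ)`. Dominated convergence makes `c ↦ ∫₀¹ G_c` continuous on
`(-∞, λ²]` with limit `0` at `-∞`; composing with `x₀ ↦ ±x₀^{-2/λ}` gives all claims.
-/

open Real Set Filter MeasureTheory intervalIntegral
open scoped Topology Interval

theorem intervalIntegrable_and_integral_eq_of_abs_deriv_mul_eq_const
    {φ φ' f : ℝ → ℝ} {a b k : ℝ} (hab : a ≤ b) (hφ : ContinuousOn φ (Icc a b))
    (hmono : StrictMonoOn φ (Icc a b)) (hφ' : ∀ x ∈ Ioo a b, HasDerivAt φ (φ' x) x)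
    (hk : ∀ x ∈ Ioo a b, |φ' x| * f (φ x) = k) :
    IntervalIntegrable f volume (φ a) (φ b) ∧ ∫ y in (φ a)..(φ b), f y = k * (b - a) := by
  have hφab : φ a ≤ φ b := hmono.monotoneOn (left_mem_Icc.2 hab) (right_mem_Icc.2 hab) hab
  have himage : φ '' Ioo a b = Ioo (φ a) (φ b) := hφ.image_Ioo_of_strictMonoOn hab hmono
  have hinj : InjOn φ (Ioo a b) := hmono.injOn.mono Ioo_subset_Icc_self
  have hφ'within : ∀ x ∈ Ioo a b, HasDerivWithinAt φ (φ' x) (Ioo a b) x :=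
    fun x hx => (hφ' x hx).hasDerivWithinAt
  rw [intervalIntegrable_iff_integrableOn_Ioo_of_le hφab, integral_of_le hφab,
    integral_Ioc_eq_integral_Ioo, ← himage,
    integrableOn_image_iff_integrableOn_abs_deriv_smul measurableSet_Ioo hφ'within hinj,
    integral_image_eq_integral_abs_deriv_smul measurableSet_Ioo hφ'within hinj]
  simp only [smul_eq_mul]
  rw [setIntegral_congr_fun measurableSet_Ioo hk]
  refine ⟨(integrableOn_const measure_Ioo_lt_top.ne).congr_fun (fun x hx => (hk x hx).symm)
    measurableSet_Ioo, ?_⟩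
  simp [hab, mul_comm]

theorem sq_rpow_neg_one_div_two {x : ℝ} (hx : 0 < x) : (x ^ 2) ^ (-(1:ℝ)/2) = x⁻¹ := by
  rw [← rpow_natCast, ← rpow_mul hx.le]
  norm_num [rpow_neg_one]

theorem strictMonoOn_sin_Icc_zero_pi_div_two : StrictMonoOn sin (Icc 0 (π / 2)) :=
  strictMonoOn_sin.mono (Icc_subset_Icc (by linarith [pi_pos]) le_rfl)

theorem strictMonoOn_sin_rpow {r : ℝ} (hr : 0 < r) :
    StrictMonoOn (fun θ => sin θ ^ r) (Icc 0 (π / 2)) := by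
  refine (strictMonoOn_rpow_Ici_of_exponent_pos hr).comp
    strictMonoOn_sin_Icc_zero_pi_div_two fun θ hθ => ?_
  exact sin_nonneg_of_nonneg_of_le_pi hθ.1 (hθ.2.trans (by linarith [pi_pos]))

noncomputable def lifespanRadicand (lam c ξ : ℝ) : ℝ :=
  lam ^ 2 * (1 - ξ ^ (2:ℕ)) - c * (1 - ξ ^ ((2 * lam - 2) / lam))

noncomputable def lifespanIntegrand (lam c ξ : ℝ) : ℝ :=
  lifespanRadicand lam c ξ ^ (-(1:ℝ)/2)

noncomputable def lifespanIntegral (lam c : ℝ) : ℝ :=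
  ∫ ξ in (0:ℝ)..1, lifespanIntegrand lam c ξ

section Radicand

variable {lam c c' ξ : ℝ}

theorem lifespanRadicand_zero (lam ξ : ℝ) :
    lifespanRadicand lam 0 ξ = lam ^ 2 * (1 - ξ ^ 2) := by
  simp [lifespanRadicand]

theorem lifespanRadicand_lam_sq_rpow (hlam : 0 < lam) {s : ℝ} (hs : 0 < s) :
    lifespanRadicand lam (lam ^ 2) (s ^ lam) = (lam * s ^ (lam - 1)) ^ 2 * (1 - s ^ 2) := by
  have hpow : s ^ lam = s ^ (lam - 1) * s := by
    rw [← rpow_add_one hs.ne', sub_add_cancel]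
  have hexp : (s ^ lam) ^ ((2 * lam - 2) / lam) = (s ^ (lam - 1)) ^ 2 := by
    rw [← rpow_mul hs.le, ← rpow_mul_natCast hs.le]
    congr 1
    field_simp
    ring
  rw [lifespanRadicand, hexp, hpow]
  ring

theorem lifespanRadicand_lam_sq_pos (hlam : 0 < lam) (hξ : ξ ∈ Ioo 0 1) :
    0 < lifespanRadicand lam (lam ^ 2) ξ := by
  have hξpow : ξ ^ (2:ℕ) < ξ ^ ((2 * lam - 2) / lam) := by
    rw [← rpow_natCast]
    refine rpow_lt_rpow_of_exponent_gt hξ.1 hξ.2 ?_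
    rw [div_lt_iff₀ hlam]
    push_cast
    linarith
  have : lifespanRadicand lam (lam ^ 2) ξ =
      lam ^ 2 * (ξ ^ ((2 * lam - 2) / lam) - ξ ^ (2:ℕ)) := by
    rw [lifespanRadicand]; ring
  rw [this]
  exact mul_pos (by positivity) (sub_pos.2 hξpow)

theorem one_sub_rpow_lifespan_exponent_pos (hlam : 1 < lam) (hξ : ξ ∈ Ioo 0 1) :
    0 < 1 - ξ ^ ((2 * lam - 2) / lam) :=
  sub_pos.2 (rpow_lt_one hξ.1.le hξ.2 (div_pos (by linarith) (by linarith)))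

theorem lifespanRadicand_lt_of_lt (hlam : 1 < lam) (hξ : ξ ∈ Ioo 0 1) (hcc : c < c') :
    lifespanRadicand lam c' ξ < lifespanRadicand lam c ξ := by
  have := mul_lt_mul_of_pos_right hcc (one_sub_rpow_lifespan_exponent_pos hlam hξ)
  simp only [lifespanRadicand]
  linarith

theorem lifespanRadicand_pos (hlam : 1 < lam) (hc : c ≤ lam ^ 2) (hξ : ξ ∈ Ioo 0 1) :
    0 < lifespanRadicand lam c ξ := by
  have hpos := lifespanRadicand_lam_sq_pos (lam := lam) (by linarith) hξ
  rcases hc.lt_or_eq with hc | rfl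
  · exact hpos.trans (lifespanRadicand_lt_of_lt hlam hξ hc)
  · exact hpos

theorem tendsto_lifespanRadicand_atBot (hlam : 1 < lam) (hξ : ξ ∈ Ioo 0 1) :
    Tendsto (fun c => lifespanRadicand lam c ξ) atBot atTop := by
  have hlin : Tendsto (fun c => -c * (1 - ξ ^ ((2 * lam - 2) / lam))) atBot atTop :=
    tendsto_neg_atBot_atTop.atTop_mul_const (one_sub_rpow_lifespan_exponent_pos hlam hξ)
  refine (tendsto_atTop_add_const_left _ (lam ^ 2 * (1 - ξ ^ (2:ℕ))) hlin).congr fun c => ?_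
  rw [lifespanRadicand]; ring

end Radicand

section Integrand

variable {lam c c' ξ : ℝ}

theorem lifespanIntegrand_lt_of_lt (hlam : 1 < lam) (hξ : ξ ∈ Ioo 0 1) (hcc : c < c')
    (hc' : c' ≤ lam ^ 2) : lifespanIntegrand lam c ξ < lifespanIntegrand lam c' ξ :=
  rpow_lt_rpow_of_neg (lifespanRadicand_pos hlam hc' hξ)
    (lifespanRadicand_lt_of_lt hlam hξ hcc) (by norm_num)

theorem norm_lifespanIntegrand_le (hlam : 1 < lam) (hc : c ≤ lam ^ 2) (hξ : ξ ∈ Ioo 0 1) :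
    ‖lifespanIntegrand lam c ξ‖ ≤ lifespanIntegrand lam (lam ^ 2) ξ := by
  have hnonneg : 0 ≤ lifespanIntegrand lam c ξ :=
    rpow_nonneg (lifespanRadicand_pos hlam hc hξ).le _
  rw [Real.norm_of_nonneg hnonneg]
  rcases hc.lt_or_eq with hc | rfl
  · exact (lifespanIntegrand_lt_of_lt hlam hξ hc le_rfl).le
  · exact le_rfl

theorem continuousAt_lifespanIntegrand (hlam : 1 < lam) (hc : c ≤ lam ^ 2) (hξ : ξ ∈ Ioo 0 1) :
    ContinuousAt (fun c => lifespanIntegrand lam c ξ) c := by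
  have hrad : Continuous fun c => lifespanRadicand lam c ξ := by
    unfold lifespanRadicand; fun_prop
  exact hrad.continuousAt.rpow_const (Or.inl (lifespanRadicand_pos hlam hc hξ).ne')

theorem tendsto_lifespanIntegrand_atBot (hlam : 1 < lam) (hξ : ξ ∈ Ioo 0 1) :
    Tendsto (fun c => lifespanIntegrand lam c ξ) atBot (𝓝 0) := by
  have hpow : Tendsto (fun x : ℝ => x ^ (-(1:ℝ)/2)) atTop (𝓝 0) := by
    simpa [neg_div] using tendsto_rpow_neg_atTop (by norm_num : (0:ℝ) < 1/2)
  exact hpow.comp (tendsto_lifespanRadicand_atBot hlam hξ)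

theorem measurable_lifespanIntegrand (lam c : ℝ) : Measurable (lifespanIntegrand lam c) := by
  unfold lifespanIntegrand lifespanRadicand; fun_prop

theorem intervalIntegrable_and_lifespanIntegral_lam_sq (hlam : 0 < lam) :
    IntervalIntegrable (lifespanIntegrand lam (lam ^ 2)) volume 0 1 ∧
      lifespanIntegral lam (lam ^ 2) = π / 2 := by
  have hφ : ContinuousOn (fun θ => sin θ ^ lam) (Icc 0 (π / 2)) :=
    ((continuous_rpow_const hlam.le).comp continuous_sin).continuousOn
  have hφ' : ∀ θ ∈ Ioo 0 (π / 2),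
      HasDerivAt (fun θ => sin θ ^ lam) (cos θ * lam * sin θ ^ (lam - 1)) θ := fun θ hθ =>
    (hasDerivAt_sin θ).rpow_const
      (Or.inl (sin_pos_of_pos_of_lt_pi hθ.1 (by linarith [hθ.2, pi_pos])).ne')
  have hk : ∀ θ ∈ Ioo 0 (π / 2),
      |cos θ * lam * sin θ ^ (lam - 1)| * lifespanIntegrand lam (lam ^ 2) (sin θ ^ lam) = 1 := by
    intro θ hθ
    have hsin := sin_pos_of_pos_of_lt_pi hθ.1 (by linarith [hθ.2, pi_pos])
    have hpos : 0 < cos θ * lam * sin θ ^ (lam - 1) :=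
      mul_pos (mul_pos (cos_pos_of_mem_Ioo ⟨by linarith [hθ.1, pi_pos], hθ.2⟩) hlam)
        (rpow_pos_of_pos hsin _)
    rw [lifespanIntegrand, lifespanRadicand_lam_sq_rpow hlam hsin, ← cos_sq', ← mul_pow,
      show lam * sin θ ^ (lam - 1) * cos θ = cos θ * lam * sin θ ^ (lam - 1) by ring,
      sq_rpow_neg_one_div_two hpos, abs_of_pos hpos, mul_inv_cancel₀ hpos.ne']
  have := intervalIntegrable_and_integral_eq_of_abs_deriv_mul_eq_const (by positivity) hφ
    (strictMonoOn_sin_rpow hlam) hφ' hk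
  simpa [zero_rpow hlam.ne', lifespanIntegral] using this

theorem lifespanIntegral_zero (hlam : 0 < lam) : lifespanIntegral lam 0 = π / (2 * lam) := by
  have hk : ∀ θ ∈ Ioo 0 (π / 2), |cos θ| * lifespanIntegrand lam 0 (sin θ) = lam⁻¹ := by
    intro θ hθ
    have hcos : 0 < cos θ := cos_pos_of_mem_Ioo ⟨by linarith [hθ.1, pi_pos], hθ.2⟩
    rw [lifespanIntegrand, lifespanRadicand_zero, ← cos_sq', ← mul_pow,
      sq_rpow_neg_one_div_two (mul_pos hlam hcos), abs_of_pos hcos]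
    field_simp
  have := intervalIntegrable_and_integral_eq_of_abs_deriv_mul_eq_const (by positivity)
    continuous_sin.continuousOn strictMonoOn_sin_Icc_zero_pi_div_two
    (fun θ _ => hasDerivAt_sin θ) hk
  have hint := this.2
  rw [sin_zero, sin_pi_div_two, sub_zero] at hint
  rw [lifespanIntegral, hint]
  field_simp

end Integrand

section Integral

variable {lam c : ℝ}

theorem ae_mem_Ioo_of_mem_uIoc_zero_one : ∀ᵐ ξ : ℝ, ξ ∈ Ι (0:ℝ) 1 → ξ ∈ Ioo (0:ℝ) 1 := by
  rw [uIoc_of_le zero_le_one]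
  exact Ioo_ae_eq_Ioc.symm.le

theorem ae_norm_lifespanIntegrand_le (hlam : 1 < lam) (hc : c ≤ lam ^ 2) :
    ∀ᵐ ξ : ℝ, ξ ∈ Ι (0:ℝ) 1 →
      ‖lifespanIntegrand lam c ξ‖ ≤ lifespanIntegrand lam (lam ^ 2) ξ := by
  filter_upwards [ae_mem_Ioo_of_mem_uIoc_zero_one] with ξ hξ hξ'
  exact norm_lifespanIntegrand_le hlam hc (hξ hξ')

theorem intervalIntegrable_lifespanIntegrand (hlam : 1 < lam) (hc : c ≤ lam ^ 2) :
    IntervalIntegrable (lifespanIntegrand lam c) volume 0 1 :=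
  (intervalIntegrable_and_lifespanIntegral_lam_sq (lam := lam) (by linarith)).1.mono_fun'
    (measurable_lifespanIntegrand lam c).aestronglyMeasurable
    ((ae_restrict_iff' measurableSet_uIoc).2 (ae_norm_lifespanIntegrand_le hlam hc))

theorem strictMonoOn_lifespanIntegral (hlam : 1 < lam) :
    StrictMonoOn (lifespanIntegral lam) (Iic (lam ^ 2)) := by
  intro c hc c' hc' hcc
  have hint := intervalIntegrable_lifespanIntegrand hlam hc
  have hint' := intervalIntegrable_lifespanIntegrand hlam hc'
  have hpos := intervalIntegral_pos_of_pos_on (hint'.sub hint)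
    (fun ξ hξ => sub_pos.2 (lifespanIntegrand_lt_of_lt hlam hξ hcc hc')) one_pos
  rw [intervalIntegral.integral_sub hint' hint] at hpos
  exact sub_pos.1 hpos

theorem continuousOn_lifespanIntegral (hlam : 1 < lam) :
    ContinuousOn (lifespanIntegral lam) (Iic (lam ^ 2)) := fun c₀ hc₀ =>
  continuousWithinAt_of_dominated_interval
    (Eventually.of_forall fun c => (measurable_lifespanIntegrand lam c).aestronglyMeasurable)
    (eventually_nhdsWithin_of_forall fun c hc => ae_norm_lifespanIntegrand_le hlam hc)
    (intervalIntegrable_and_lifespanIntegral_lam_sq (lam := lam) (by linarith)).1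
    (by
      filter_upwards [ae_mem_Ioo_of_mem_uIoc_zero_one] with ξ hξ hξ'
      exact (continuousAt_lifespanIntegrand hlam hc₀ (hξ hξ')).continuousWithinAt)

theorem tendsto_lifespanIntegral_atBot (hlam : 1 < lam) :
    Tendsto (lifespanIntegral lam) atBot (𝓝 0) := by
  have := tendsto_integral_filter_of_dominated_convergence (μ := volume) (a := 0) (b := 1)
    (F := fun c => lifespanIntegrand lam c) (f := fun _ => 0) _
    (Eventually.of_forall fun c => (measurable_lifespanIntegrand lam c).aestronglyMeasurable)
    ((eventually_le_atBot (lam ^ 2)).mono fun c hc => ae_norm_lifespanIntegrand_le hlam hc)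
    (intervalIntegrable_and_lifespanIntegral_lam_sq (lam := lam) (by linarith)).1
    (by
      filter_upwards [ae_mem_Ioo_of_mem_uIoc_zero_one] with ξ hξ hξ'
      exact tendsto_lifespanIntegrand_atBot hlam (hξ hξ'))
  rwa [intervalIntegral.integral_zero] at this

end Integral

theorem lifespanIntegrand_neg (lam c : ℝ) :
    lifespanIntegrand lam (-c) = fun ξ =>
      (lam ^ 2 * (1 - ξ ^ (2:ℕ)) + c * (1 - ξ ^ ((2 * lam - 2) / lam))) ^ (-(1:ℝ)/2) := by
  funext ξ
  rw [lifespanIntegrand, lifespanRadicand, neg_mul, sub_neg_eq_add]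

theorem rpow_neg_two_div_lt_sq {lam x : ℝ} (hlam : 0 < lam) (hx : lam ^ (-lam) < x) :
    x ^ (-(2 / lam)) < lam ^ 2 := by
  have h := rpow_lt_rpow_of_neg (rpow_pos_of_pos hlam _) hx
    (neg_neg_of_pos (div_pos two_pos hlam))
  rwa [← rpow_mul hlam.le, neg_mul_neg, mul_div_cancel₀ _ hlam.ne', rpow_two] at h

theorem tendsto_rpow_neg_two_div_nhdsGT {lam : ℝ} (hlam : 0 < lam) :
    Tendsto (fun x : ℝ => x ^ (-(2 / lam))) (𝓝[>] (lam ^ (-lam))) (𝓝[≤] (lam ^ 2)) := by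
  have hcont : ContinuousAt (fun x : ℝ => x ^ (-(2 / lam))) (lam ^ (-lam)) :=
    continuousAt_rpow_const _ _ (Or.inl (rpow_pos_of_pos hlam _).ne')
  have hval : (lam ^ (-lam)) ^ (-(2 / lam)) = lam ^ 2 := by
    rw [← rpow_mul hlam.le, neg_mul_neg, mul_div_cancel₀ _ hlam.ne', rpow_two]
  refine tendsto_nhdsWithin_iff.2 ⟨?_, ?_⟩
  · rw [← hval]
    exact hcont.tendsto.mono_left nhdsWithin_le_nhds
  · filter_upwards [self_mem_nhdsWithin] with x hx
    exact (rpow_neg_two_div_lt_sq hlam hx).le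

theorem strictAntiOn_lifespanIntegral_rpow_neg_two_div {lam : ℝ} (hlam : 1 < lam) :
    StrictAntiOn (fun x => lifespanIntegral lam (x ^ (-(2 / lam)))) (Ioi (lam ^ (-lam))) := by
  have hlam₀ : 0 < lam := by linarith
  intro x hx y hy hxy
  exact strictMonoOn_lifespanIntegral hlam (rpow_neg_two_div_lt_sq hlam₀ hy).le
    (rpow_neg_two_div_lt_sq hlam₀ hx).le
    (rpow_lt_rpow_of_neg ((rpow_pos_of_pos hlam₀ _).trans hx) hxy
      (neg_neg_of_pos (div_pos two_pos hlam₀)))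

theorem strictMonoOn_lifespanIntegral_neg_rpow_neg_two_div {lam : ℝ} (hlam : 1 < lam) :
    StrictMonoOn (fun x => lifespanIntegral lam (-x ^ (-(2 / lam)))) (Ioi 0) := by
  have hle : ∀ x : ℝ, 0 < x → -x ^ (-(2 / lam)) ≤ lam ^ 2 := fun x hx =>
    (neg_nonpos.2 (rpow_pos_of_pos hx _).le).trans (sq_nonneg lam)
  intro x hx y hy hxy
  exact strictMonoOn_lifespanIntegral hlam (hle x hx) (hle y hy)
    (neg_lt_neg (rpow_lt_rpow_of_neg hx hxy (neg_neg_of_pos (div_pos two_pos (by linarith)))))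

/-- Monotonicity and limits of the life-span of hyperbolic solutions.
For `λ > 1` set
`T₊(x₀) = 2∫₀¹ (λ²(1-ξ²) - x₀^{-2/λ}(1 - ξ^{(2λ-2)/λ}))^{-1/2} dξ` for `x₀ > λ^{-λ}` and
`T₋(x₀) = 2∫₀¹ (λ²(1-ξ²) + x₀^{-2/λ}(1 - ξ^{(2λ-2)/λ}))^{-1/2} dξ` for `x₀ > 0`. Both integrals
are finite; `T₊` strictly decreases from `π` (as `x₀ → (λ^{-λ})⁺`) to `π/λ` (as `x₀ → ∞`), and
`T₋` strictly increases from `0` (as `x₀ → 0⁺`) to `π/λ` (as `x₀ → ∞`). -/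
theorem lifespan_monotonicity_hyperbolic
    (lam : ℝ) (hlam : 1 < lam)
    (Tp Tm : ℝ → ℝ)
    (hTp : ∀ x₀ : ℝ, Tp x₀ = 2 * ∫ ξ in (0:ℝ)..1,
      (lam ^ 2 * (1 - ξ ^ (2:ℕ)) - x₀ ^ (-(2 / lam)) * (1 - ξ ^ ((2 * lam - 2) / lam)))
        ^ (-(1:ℝ)/2))
    (hTm : ∀ x₀ : ℝ, Tm x₀ = 2 * ∫ ξ in (0:ℝ)..1,
      (lam ^ 2 * (1 - ξ ^ (2:ℕ)) + x₀ ^ (-(2 / lam)) * (1 - ξ ^ ((2 * lam - 2) / lam)))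
        ^ (-(1:ℝ)/2)) :
    (∀ x₀ : ℝ, lam ^ (-lam) < x₀ →
      IntervalIntegrable (fun ξ =>
        (lam ^ 2 * (1 - ξ ^ (2:ℕ)) - x₀ ^ (-(2 / lam)) * (1 - ξ ^ ((2 * lam - 2) / lam)))
          ^ (-(1:ℝ)/2)) MeasureTheory.volume 0 1) ∧
    (∀ x₀ : ℝ, 0 < x₀ →
      IntervalIntegrable (fun ξ =>
        (lam ^ 2 * (1 - ξ ^ (2:ℕ)) + x₀ ^ (-(2 / lam)) * (1 - ξ ^ ((2 * lam - 2) / lam)))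
          ^ (-(1:ℝ)/2)) MeasureTheory.volume 0 1) ∧
    StrictAntiOn Tp (Set.Ioi (lam ^ (-lam))) ∧
    Filter.Tendsto Tp (nhdsWithin (lam ^ (-lam)) (Set.Ioi (lam ^ (-lam)))) (nhds Real.pi) ∧
    Filter.Tendsto Tp Filter.atTop (nhds (Real.pi / lam)) ∧
    StrictMonoOn Tm (Set.Ioi (0 : ℝ)) ∧
    Filter.Tendsto Tm (nhdsWithin 0 (Set.Ioi (0 : ℝ))) (nhds 0) ∧
    Filter.Tendsto Tm Filter.atTop (nhds (Real.pi / lam)) := by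
  have hlam₀ : 0 < lam := by linarith
  obtain rfl : Tp = fun x₀ => 2 * lifespanIntegral lam (x₀ ^ (-(2 / lam))) := funext hTp
  obtain rfl : Tm = fun x₀ => 2 * lifespanIntegral lam (-x₀ ^ (-(2 / lam))) :=
    funext fun x₀ => by simp only [hTm, lifespanIntegral, lifespanIntegrand_neg]
  have hcont₀ : ContinuousAt (lifespanIntegral lam) 0 :=
    (continuousOn_lifespanIntegral hlam).continuousAt (Iic_mem_nhds (by positivity))
  have hlim₀ : π / lam = 2 * lifespanIntegral lam 0 := by
    rw [lifespanIntegral_zero hlam₀]; field_simp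
  have hlim₁ : π = 2 * lifespanIntegral lam (lam ^ 2) := by
    rw [(intervalIntegrable_and_lifespanIntegral_lam_sq hlam₀).2]; ring
  have hrpow := tendsto_rpow_neg_atTop (div_pos two_pos hlam₀)
  refine ⟨fun x₀ hx₀ => intervalIntegrable_lifespanIntegrand hlam
      (rpow_neg_two_div_lt_sq hlam₀ hx₀).le, fun x₀ hx₀ => ?_,
    fun x hx y hy hxy => by
      linarith [strictAntiOn_lifespanIntegral_rpow_neg_two_div hlam hx hy hxy],
    ?_, ?_,
    fun x hx y hy hxy => by
      linarith [strictMonoOn_lifespanIntegral_neg_rpow_neg_two_div hlam hx hy hxy], ?_, ?_⟩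
  · rw [← lifespanIntegrand_neg]
    exact intervalIntegrable_lifespanIntegrand hlam
      ((neg_nonpos.2 (rpow_pos_of_pos hx₀ _).le).trans (sq_nonneg lam))
  · rw [hlim₁]
    exact ((continuousOn_lifespanIntegral hlam _ self_mem_Iic).tendsto.comp
      (tendsto_rpow_neg_two_div_nhdsGT hlam₀)).const_mul 2
  · rw [hlim₀]
    exact (hcont₀.tendsto.comp hrpow).const_mul 2
  · simpa using ((tendsto_lifespanIntegral_atBot hlam).comp (tendsto_neg_atTop_atBot.comp
      (tendsto_rpow_neg_nhdsGT_zero (neg_neg_of_pos (div_pos two_pos hlam₀))))).const_mul 2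
  · rw [hlim₀]
    exact (hcont₀.tendsto.comp (by simpa using hrpow.neg)).const_mul 2
end

section
/- Let λ > 0 and P = 0, and let (ψ, (a, b)) be a local solution of the homogeneous Euler ODE with parameters (λ, 0). Then b − a = π and, setting c = (a+b)/2 and A = ψ(c), one has ψ(θ) = A (cos(θ − c))^λ for all θ ∈ (a, b). -/
open Real Set

/-!
The substitution `w = ψ' / (λ ψ)` turns the equation into the Riccati equation `w' = -(1 + w²)`,
so `arctan w + θ` is a constant `c`, i.e. `w = tan (c - θ)` with `(a, b) ⊆ (c - π/2, c + π/2)`.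
Then `(log ψ)' = λ tan (c - θ)` integrates to `ψ = E cos (θ - c) ^ λ` with `E > 0`. This formula
persists to `[a, b]` by continuity, so `cos` vanishes at `a - c` and `b - c`, which forces
`a = c - π/2` and `b = c + π/2`.
-/

lemma IsOpen.exists_const_of_hasDerivAt_zero {f : ℝ → ℝ} {s : Set ℝ} (hs : IsOpen s)
    (hs' : IsPreconnected s) (hf : ∀ x ∈ s, HasDerivAt f 0 x) : ∃ C, ∀ x ∈ s, f x = C :=
  hs.exists_is_const_of_deriv_eq_zero hs'
    (fun x hx => (hf x hx).differentiableAt.differentiableWithinAt) fun x hx => (hf x hx).deriv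

lemma hasDerivAt_riccati_of_euler {lam θ ψ'' : ℝ} {ψ ψ' : ℝ → ℝ} (hlam : lam ≠ 0) (hψ : ψ θ ≠ 0)
    (hd1 : HasDerivAt ψ (ψ' θ) θ) (hd2 : HasDerivAt ψ' ψ'' θ)
    (hode : lam * ψ'' * ψ θ = (lam - 1) * ψ' θ ^ 2 - lam ^ 2 * ψ θ ^ 2) :
    HasDerivAt (fun t => ψ' t / (lam * ψ t)) (-(1 + (ψ' θ / (lam * ψ θ)) ^ 2)) θ := by
  refine (hd2.div (hd1.const_mul lam) (mul_ne_zero hlam hψ)).congr_deriv ?_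
  field_simp
  linear_combination hode

lemma IsOpen.exists_eq_tan_sub_of_riccati {w : ℝ → ℝ} {s : Set ℝ} (hs : IsOpen s)
    (hs' : IsPreconnected s) (hw : ∀ θ ∈ s, HasDerivAt w (-(1 + w θ ^ 2)) θ) :
    ∃ c, s ⊆ Ioo (c - π / 2) (c + π / 2) ∧ ∀ θ ∈ s, w θ = tan (c - θ) := by
  have hderiv : ∀ θ ∈ s, HasDerivAt (fun t => arctan (w t) + t) 0 θ := by
    intro θ hθ
    refine (((hasDerivAt_arctan (w θ)).comp θ (hw θ hθ)).add (hasDerivAt_id θ)).congr_deriv ?_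
    field_simp
    ring
  obtain ⟨c, hc⟩ := hs.exists_const_of_hasDerivAt_zero hs' hderiv
  have harctan : ∀ θ ∈ s, arctan (w θ) = c - θ := fun θ hθ => by linarith [hc θ hθ]
  refine ⟨c, fun θ hθ => ?_, fun θ hθ => by rw [← harctan θ hθ, tan_arctan]⟩
  have h₁ := neg_pi_div_two_lt_arctan (w θ)
  have h₂ := arctan_lt_pi_div_two (w θ)
  rw [harctan θ hθ] at h₁ h₂
  constructor <;> linarith

lemma IsOpen.exists_eq_mul_cos_rpow {ψ : ℝ → ℝ} {lam c : ℝ} {s : Set ℝ} (hs : IsOpen s)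
    (hs' : IsPreconnected s) (hsub : s ⊆ Ioo (c - π / 2) (c + π / 2))
    (hpos : ∀ θ ∈ s, 0 < ψ θ) (hd : ∀ θ ∈ s, HasDerivAt ψ (lam * ψ θ * tan (c - θ)) θ) :
    ∃ E > 0, EqOn ψ (fun θ => E * cos (θ - c) ^ lam) s := by
  have hcos : ∀ θ ∈ s, 0 < cos (θ - c) := fun θ hθ => by
    obtain ⟨h1, h2⟩ := hsub hθ
    exact cos_pos_of_mem_Ioo ⟨by linarith, by linarith⟩
  have hderiv : ∀ θ ∈ s, HasDerivAt (fun t => log (ψ t) - lam * log (cos (t - c))) 0 θ := by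
    intro θ hθ
    have hcos' : HasDerivAt (fun t => cos (t - c)) (-sin (θ - c)) θ := by
      simpa using ((hasDerivAt_id' θ).sub_const c).cos
    refine (((hd θ hθ).log (hpos θ hθ).ne').sub
      ((hcos'.log (hcos θ hθ).ne').const_mul lam)).congr_deriv ?_
    rw [tan_eq_sin_div_cos, ← neg_sub θ c, sin_neg, cos_neg]
    field_simp [(hpos θ hθ).ne', (hcos θ hθ).ne']
    ring
  obtain ⟨L, hL⟩ := hs.exists_const_of_hasDerivAt_zero hs' hderiv
  refine ⟨exp L, exp_pos L, fun θ hθ => ?_⟩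
  dsimp only
  rw [rpow_def_of_pos (hcos θ hθ), ← exp_add, ← hL θ hθ]
  conv_lhs => rw [← exp_log (hpos θ hθ)]
  congr 1
  ring

lemma eq_neg_pi_div_two_of_cos_eq_zero {x : ℝ} (h₁ : -(π / 2) ≤ x) (h₂ : x < π / 2)
    (h : cos x = 0) : x = -(π / 2) := by
  by_contra hx
  exact (cos_pos_of_mem_Ioo ⟨lt_of_le_of_ne h₁ (Ne.symm hx), h₂⟩).ne' h

lemma eq_sub_pi_div_two_of_eqOn_mul_cos_rpow {ψ : ℝ → ℝ} {a b c E lam : ℝ} (hab : a < b)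
    (hlam : 0 < lam) (hE : 0 < E) (hsub : Ioo a b ⊆ Ioo (c - π / 2) (c + π / 2))
    (hcont : ContinuousOn ψ (Icc a b)) (ha : ψ a = 0) (hb : ψ b = 0)
    (hψ : EqOn ψ (fun θ => E * cos (θ - c) ^ lam) (Ioo a b)) :
    a = c - π / 2 ∧ b = c + π / 2 := by
  have hψ_Icc : EqOn ψ (fun θ => E * cos (θ - c) ^ lam) (Icc a b) :=
    hψ.of_subset_closure hcont
      (continuous_const.mul ((continuous_cos.comp (continuous_sub_right c)).rpow_const
        fun _ => Or.inr hlam.le)).continuousOn Ioo_subset_Icc_self (closure_Ioo hab.ne).ge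
  obtain ⟨hca, hbc⟩ := (Ioo_subset_Ioo_iff hab).1 hsub
  have hcos_zero : ∀ x ∈ Icc a b, ψ x = 0 → cos (x - c) = 0 := fun x hx h0 => by
    have hcos_nonneg : 0 ≤ cos (x - c) :=
      cos_nonneg_of_mem_Icc ⟨by linarith [hx.1], by linarith [hx.2]⟩
    have := (hψ_Icc hx).symm.trans h0
    rw [mul_eq_zero, rpow_eq_zero hcos_nonneg hlam.ne'] at this
    exact this.resolve_left hE.ne'
  have hac : a - c = -(π / 2) := eq_neg_pi_div_two_of_cos_eq_zero (by linarith) (by linarith)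
    (hcos_zero a (left_mem_Icc.2 hab.le) ha)
  have hcb : c - b = -(π / 2) := eq_neg_pi_div_two_of_cos_eq_zero (by linarith) (by linarith)
    (by rw [← cos_neg, neg_sub]; exact hcos_zero b (right_mem_Icc.2 hab.le) hb)
  constructor <;> linarith

/-- For `P = 0` every local solution `(ψ, (a,b))` of the homogeneous Euler ODE
has life-span `b - a = π` and is given by `ψ(θ) = A cos(θ - c)^λ` where `c` is the midpoint of
`(a,b)` and `A = ψ(c)`. -/
theorem parallel_shear_classification
    (lam : ℝ) (hlam : 0 < lam)
    (a b : ℝ) (hab : a < b) (ψ ψ' ψ'' : ℝ → ℝ)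
    (hcont : ContinuousOn ψ (Set.Icc a b))
    (ha : ψ a = 0) (hb : ψ b = 0)
    (hpos : ∀ θ ∈ Set.Ioo a b, 0 < ψ θ)
    (hd1 : ∀ θ ∈ Set.Ioo a b, HasDerivAt ψ (ψ' θ) θ)
    (hd2 : ∀ θ ∈ Set.Ioo a b, HasDerivAt ψ' (ψ'' θ) θ)
    (hode : ∀ θ ∈ Set.Ioo a b, 2 * (lam - 1) * (0 : ℝ) =
      -(lam - 1) * (ψ' θ) ^ 2 + lam ^ 2 * (ψ θ) ^ 2 + lam * (ψ'' θ) * (ψ θ)) :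
    b - a = Real.pi ∧
      ∀ θ ∈ Set.Ioo a b, ψ θ = ψ ((a + b) / 2) * Real.cos (θ - (a + b) / 2) ^ lam := by
  set w : ℝ → ℝ := fun θ => ψ' θ / (lam * ψ θ)
  have hriccati : ∀ θ ∈ Ioo a b, HasDerivAt w (-(1 + w θ ^ 2)) θ := fun θ hθ =>
    hasDerivAt_riccati_of_euler hlam.ne' (hpos θ hθ).ne' (hd1 θ hθ) (hd2 θ hθ)
      (by linarith [hode θ hθ])
  obtain ⟨c, hsub, htan⟩ :=
    isOpen_Ioo.exists_eq_tan_sub_of_riccati isPreconnected_Ioo hriccati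
  have hlogderiv : ∀ θ ∈ Ioo a b, HasDerivAt ψ (lam * ψ θ * tan (c - θ)) θ := fun θ hθ =>
    (hd1 θ hθ).congr_deriv <| by
      rw [← htan θ hθ]
      simp only [w]
      field_simp [hlam.ne', (hpos θ hθ).ne']
  obtain ⟨E, hE, hψ⟩ := isOpen_Ioo.exists_eq_mul_cos_rpow isPreconnected_Ioo hsub hpos hlogderiv
  obtain ⟨hac, hbc⟩ := eq_sub_pi_div_two_of_eqOn_mul_cos_rpow hab hlam hE hsub hcont ha hb hψ
  have hmid : (a + b) / 2 = c := by linarith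
  have hc_mem : c ∈ Ioo a b := ⟨by linarith [pi_pos], by linarith [pi_pos]⟩
  refine ⟨by linarith, fun θ hθ => ?_⟩
  rw [hmid, hψ hc_mem, hψ hθ]
  simp only [sub_self, cos_zero, one_rpow, mul_one]
end

section
/- Let λ = 2 and P ∈ ℝ, let I be an open interval, and let ψ : I → ℝ be a strictly positive classical solution of the homogeneous Euler ODE with parameters (2, P) such that ψ′(c) = 0 for some c ∈ I. Then, with A = ψ(c), γ₁ = (A + P/(2A))/2 and γ₂ = (A − P/(2A))/2, one has ψ(θ) = γ₁ + γ₂ cos(2(θ − c)) for all θ ∈ I; in particular P = 2(γ₁² − γ₂²). -/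
/-!
Along a solution of the `λ = 2` equation the quantity `(ψ'² + 2P)/ψ + 4ψ` is a first
integral; at the critical point `c` it equals `2A + P/A = 4γ₁`. Eliminating `ψ'²` between
this identity and the equation leaves the linear equation `ψ'' = 4γ₁ - 4ψ`, whose solution
with `ψ(c) = A`, `ψ'(c) = 0` is `γ₁ + γ₂ cos(2(θ - c))`; uniqueness follows from the energy
`w'² + 4w²` of the difference `w`.
-/

open Real Set

theorem IsOpen.eq_of_hasDerivAt_zero {s : Set ℝ} (hs : IsOpen s) (hs' : IsPreconnected s)
    {f : ℝ → ℝ} (hf : ∀ x ∈ s, HasDerivAt f 0 x) {x y : ℝ} (hx : x ∈ s) (hy : y ∈ s) :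
    f x = f y :=
  hs.is_const_of_deriv_eq_zero hs'
    (fun z hz => (hf z hz).differentiableAt.differentiableWithinAt)
    (fun z hz => (hf z hz).deriv) hx hy

section Oscillator

variable {I : Set ℝ} {k c : ℝ} {w w' : ℝ → ℝ}

theorem harmonic_eq_zero_of_initial_eq_zero (hI : IsOpen I) (hI' : IsPreconnected I)
    (hk : 0 < k) (hw : ∀ x ∈ I, HasDerivAt w (w' x) x) (hw' : ∀ x ∈ I, HasDerivAt w' (-(k * w x)) x)
    (hc : c ∈ I) (hwc : w c = 0) (hw'c : w' c = 0) {x : ℝ} (hx : x ∈ I) : w x = 0 := by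
  have henergy : ∀ y ∈ I, HasDerivAt (fun t => w' t ^ 2 + k * w t ^ 2) 0 y := fun y hy => by
    refine (((hw' y hy).pow 2).add (((hw y hy).pow 2).const_mul k)).congr_deriv ?_
    push_cast
    ring
  have hx0 : w' x ^ 2 + k * w x ^ 2 = 0 := by
    simpa [hwc, hw'c] using hI.eq_of_hasDerivAt_zero hI' henergy hx hc
  have : k * w x ^ 2 = 0 := by nlinarith [sq_nonneg (w' x), sq_nonneg (w x)]
  simpa [hk.ne'] using this

end Oscillator

section Trigonometric

variable (γ ω c θ : ℝ)

theorem hasDerivAt_mul_cos_mul_sub :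
    HasDerivAt (fun t => γ * cos (ω * (t - c))) (-(ω * γ * sin (ω * (θ - c)))) θ := by
  refine ((((hasDerivAt_id θ).sub_const c).const_mul ω).cos.const_mul γ).congr_deriv ?_
  simp only [id, mul_one]
  ring

theorem hasDerivAt_mul_sin_mul_sub :
    HasDerivAt (fun t => γ * sin (ω * (t - c))) (ω * γ * cos (ω * (θ - c))) θ := by
  refine ((((hasDerivAt_id θ).sub_const c).const_mul ω).sin.const_mul γ).congr_deriv ?_
  simp only [id, mul_one]
  ring

end Trigonometric

section Euler

variable {P : ℝ} {ψ ψ' ψ'' : ℝ → ℝ}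

theorem hasDerivAt_eulerFirstIntegral {θ : ℝ} (hψ : ψ θ ≠ 0) (hd1 : HasDerivAt ψ (ψ' θ) θ)
    (hd2 : HasDerivAt ψ' (ψ'' θ) θ)
    (hode : 2 * P = -ψ' θ ^ 2 + 4 * ψ θ ^ 2 + 2 * ψ'' θ * ψ θ) :
    HasDerivAt (fun t => (ψ' t ^ 2 + 2 * P) / ψ t + 4 * ψ t) 0 θ := by
  refine ((((hd2.pow 2).add_const (2 * P)).div hd1 hψ).add (hd1.const_mul 4)).congr_deriv ?_
  field_simp
  simp only [Pi.pow_apply]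
  linear_combination -ψ' θ * hode

theorem euler_secondDeriv_eq {I : Set ℝ} (hI : IsOpen I) (hI' : IsPreconnected I)
    (hpos : ∀ θ ∈ I, 0 < ψ θ) (hd1 : ∀ θ ∈ I, HasDerivAt ψ (ψ' θ) θ)
    (hd2 : ∀ θ ∈ I, HasDerivAt ψ' (ψ'' θ) θ)
    (hode : ∀ θ ∈ I, 2 * P = -ψ' θ ^ 2 + 4 * ψ θ ^ 2 + 2 * ψ'' θ * ψ θ)
    {c : ℝ} (hc : c ∈ I) (hc' : ψ' c = 0) {θ : ℝ} (hθ : θ ∈ I) :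
    ψ'' θ = 2 * ψ c + P / ψ c - 4 * ψ θ := by
  have hψ : ψ θ ≠ 0 := (hpos θ hθ).ne'
  have hA : ψ c ≠ 0 := (hpos c hc).ne'
  have hconst := hI.eq_of_hasDerivAt_zero hI'
    (fun t ht => hasDerivAt_eulerFirstIntegral (hpos t ht).ne' (hd1 t ht) (hd2 t ht) (hode t ht))
    hθ hc
  simp only [hc'] at hconst
  field_simp at hconst ⊢
  refine mul_right_cancel₀ (mul_ne_zero two_ne_zero hψ) ?_
  linear_combination hconst - ψ c * hode θ hθ

end Euler

/-- For `λ = 2`, every strictly positive classical solution of the homogeneous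
Euler ODE on an open interval `I` with a critical point `c ∈ I` is of the form
`ψ(θ) = γ₁ + γ₂ cos(2(θ - c))` with `γ₁ = (A + P/(2A))/2`, `γ₂ = (A - P/(2A))/2`, `A = ψ(c)`;
in particular `P = 2(γ₁² - γ₂²)`. -/
theorem lambda_two_classification
    (P : ℝ) (I : Set ℝ) (hIopen : IsOpen I) (hIconn : IsPreconnected I)
    (ψ ψ' ψ'' : ℝ → ℝ)
    (hpos : ∀ θ ∈ I, 0 < ψ θ)
    (hd1 : ∀ θ ∈ I, HasDerivAt ψ (ψ' θ) θ)
    (hd2 : ∀ θ ∈ I, HasDerivAt ψ' (ψ'' θ) θ)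
    (hode : ∀ θ ∈ I, 2 * ((2:ℝ) - 1) * P =
      -((2:ℝ) - 1) * (ψ' θ) ^ 2 + (2:ℝ) ^ 2 * (ψ θ) ^ 2 + 2 * (ψ'' θ) * (ψ θ))
    (c : ℝ) (hc : c ∈ I) (hc' : ψ' c = 0) :
    (∀ θ ∈ I, ψ θ = (ψ c + P / (2 * ψ c)) / 2 +
      (ψ c - P / (2 * ψ c)) / 2 * Real.cos (2 * (θ - c))) ∧
    P = 2 * (((ψ c + P / (2 * ψ c)) / 2) ^ 2 - ((ψ c - P / (2 * ψ c)) / 2) ^ 2) := by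
  have hA : ψ c ≠ 0 := (hpos c hc).ne'
  set γ₁ := (ψ c + P / (2 * ψ c)) / 2 with hγ₁
  set γ₂ := (ψ c - P / (2 * ψ c)) / 2 with hγ₂
  have hode' : ∀ θ ∈ I, 2 * P = -ψ' θ ^ 2 + 4 * ψ θ ^ 2 + 2 * ψ'' θ * ψ θ := fun θ hθ => by
    linarith [hode θ hθ]
  have hlin : ∀ θ ∈ I, ψ'' θ = 4 * γ₁ - 4 * ψ θ := fun θ hθ => by
    rw [euler_secondDeriv_eq hIopen hIconn hpos hd1 hd2 hode' hc hc' hθ, hγ₁]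
    field_simp
    ring
  refine ⟨fun θ hθ => sub_eq_zero.mp ?_, by rw [hγ₁, hγ₂]; field_simp; ring⟩
  refine harmonic_eq_zero_of_initial_eq_zero hIopen hIconn four_pos
    (fun t ht => (hd1 t ht).sub ((hasDerivAt_mul_cos_mul_sub γ₂ 2 c t).const_add γ₁))
    (fun t ht =>
      ((hd2 t ht).sub (hasDerivAt_mul_sin_mul_sub (2 * γ₂) 2 c t).neg).congr_deriv ?_)
    hc ?_ ?_ hθ
  · rw [hlin t ht, Pi.sub_apply]
    ring
  · simp only [Pi.sub_apply, sub_self, mul_zero, cos_zero, mul_one]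
    ring
  · simp [hc']
end

section
/- Let λ = 1/2 and P ∈ ℝ, let I be an open interval, and let ψ : I → ℝ be a strictly positive classical solution of the homogeneous Euler ODE with parameters (1/2, P) such that ψ′(c) = 0 for some c ∈ I. Then, with γ₁ = −4P and γ₂ = ψ(c)² + 4P, one has ψ(θ)² = γ₁ + γ₂ cos(θ − c) for all θ ∈ I, i.e. ψ(θ) = √(γ₁ + γ₂ cos(θ − c)). -/
/-!
For `λ = 1/2` the Euler ODE multiplied by `4` reads `(ψ²)'' = 2ψ'² + 2ψψ'' = -(ψ² + 4P)`, so
`u = ψ² + 4P` solves `u'' = -u`. Conservation of the energy `v² + v'²` for `v'' = -v` forces every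
solution on an interval to be `u(c) cos(θ - c) + u'(c) sin(θ - c)`, and `u'(c) = 2ψ(c)ψ'(c) = 0`.
-/

open Real Set

theorem Convex.eq_of_forall_hasDerivAt_zero {G : Type*} [NormedAddCommGroup G] [NormedSpace ℝ G]
    {I : Set ℝ} (hI : Convex ℝ I) {E : ℝ → G} (hE : ∀ x ∈ I, HasDerivAt E 0 x) {c x : ℝ}
    (hc : c ∈ I) (hx : x ∈ I) : E x = E c := by
  have h := hI.norm_image_sub_le_of_norm_hasDerivWithin_le (C := 0)
    (fun y hy => (hE y hy).hasDerivWithinAt) (fun _ _ => norm_zero.le) hc hx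
  rwa [zero_mul, norm_le_zero_iff, sub_eq_zero] at h

theorem Convex.eq_zero_of_hasDerivAt_of_hasDerivAt_neg {I : Set ℝ} (hI : Convex ℝ I)
    {g h : ℝ → ℝ} (hg : ∀ x ∈ I, HasDerivAt g (h x) x) (hh : ∀ x ∈ I, HasDerivAt h (-g x) x)
    {c : ℝ} (hc : c ∈ I) (hgc : g c = 0) (hhc : h c = 0) {x : ℝ} (hx : x ∈ I) : g x = 0 := by
  have henergy : ∀ y ∈ I, HasDerivAt (fun y => g y ^ 2 + h y ^ 2) 0 y := fun y hy =>
    (((hg y hy).pow 2).add ((hh y hy).pow 2)).congr_deriv (by push_cast; ring)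
  have hconst := hI.eq_of_forall_hasDerivAt_zero henergy hc hx
  simp only [hgc, hhc] at hconst
  nlinarith [sq_nonneg (g x), sq_nonneg (h x)]

theorem hasDerivAt_mul_cos_sub_add_mul_sin_sub (a b c x : ℝ) :
    HasDerivAt (fun x => a * cos (x - c) + b * sin (x - c))
      (-(a * sin (x - c)) + b * cos (x - c)) x := by
  have hlin := (hasDerivAt_id x).sub_const c
  exact ((hlin.cos.const_mul a).add (hlin.sin.const_mul b)).congr_deriv (by simp)

theorem Convex.eq_mul_cos_sub_add_mul_sin_sub {I : Set ℝ} (hI : Convex ℝ I) {f f' : ℝ → ℝ}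
    (hf : ∀ x ∈ I, HasDerivAt f (f' x) x) (hf' : ∀ x ∈ I, HasDerivAt f' (-f x) x)
    {c : ℝ} (hc : c ∈ I) {x : ℝ} (hx : x ∈ I) :
    f x = f c * cos (x - c) + f' c * sin (x - c) := by
  have hdiff := hI.eq_zero_of_hasDerivAt_of_hasDerivAt_neg
    (g := fun x => f x - (f c * cos (x - c) + f' c * sin (x - c)))
    (h := fun x => f' x - (f' c * cos (x - c) + -f c * sin (x - c)))
    (fun y hy => ((hf y hy).sub
      (hasDerivAt_mul_cos_sub_add_mul_sin_sub _ _ c y)).congr_deriv (by ring))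
    (fun y hy => ((hf' y hy).sub
      (hasDerivAt_mul_cos_sub_add_mul_sin_sub (f' c) (-f c) c y)).congr_deriv (by ring))
    hc (by simp) (by simp) hx
  exact sub_eq_zero.mp hdiff

theorem lambda_half_classification_general
    (P : ℝ) (I : Set ℝ) (hIconn : IsPreconnected I)
    (ψ ψ' ψ'' : ℝ → ℝ)
    (hpos : ∀ θ ∈ I, 0 < ψ θ)
    (hd1 : ∀ θ ∈ I, HasDerivAt ψ (ψ' θ) θ)
    (hd2 : ∀ θ ∈ I, HasDerivAt ψ' (ψ'' θ) θ)
    (hode : ∀ θ ∈ I, 2 * ((1/2 : ℝ) - 1) * P =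
      -((1/2 : ℝ) - 1) * (ψ' θ) ^ 2 + (1/2 : ℝ) ^ 2 * (ψ θ) ^ 2 + (1/2 : ℝ) * (ψ'' θ) * (ψ θ))
    (c : ℝ) (hc : c ∈ I) (hc' : ψ' c = 0) :
    ∀ θ ∈ I, ψ θ ^ 2 = (-4 * P) + (ψ c ^ 2 + 4 * P) * Real.cos (θ - c) ∧
      ψ θ = Real.sqrt ((-4 * P) + (ψ c ^ 2 + 4 * P) * Real.cos (θ - c)) := by
  have hsq : ∀ θ ∈ I, HasDerivAt (fun θ => ψ θ ^ 2 + 4 * P) (2 * ψ θ * ψ' θ) θ := fun θ hθ =>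
    (((hd1 θ hθ).pow 2).add_const (4 * P)).congr_deriv (by push_cast; ring)
  have hsq' : ∀ θ ∈ I, HasDerivAt (fun θ => 2 * ψ θ * ψ' θ) (-(ψ θ ^ 2 + 4 * P)) θ :=
    fun θ hθ =>
      (((hd1 θ hθ).const_mul 2).mul (hd2 θ hθ)).congr_deriv (by linarith [hode θ hθ])
  intro θ hθ
  have hsol := hIconn.convex.eq_mul_cos_sub_add_mul_sin_sub hsq hsq' hc hθ
  have hψsq : ψ θ ^ 2 = -4 * P + (ψ c ^ 2 + 4 * P) * cos (θ - c) := by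
    simp only [hc', mul_zero, zero_mul, add_zero] at hsol
    linarith
  exact ⟨hψsq, by rw [← hψsq, sqrt_sq (hpos θ hθ).le]⟩

/-- For `λ = 1/2`, every strictly positive classical solution of the homogeneous
Euler ODE on an open interval `I` with a critical point `c ∈ I` satisfies
`ψ(θ)² = γ₁ + γ₂ cos(θ - c)` with `γ₁ = -4P` and `γ₂ = ψ(c)² + 4P`, i.e.
`ψ(θ) = √(γ₁ + γ₂ cos(θ - c))`. -/
theorem lambda_half_classification
    (P : ℝ) (I : Set ℝ) (hIopen : IsOpen I) (hIconn : IsPreconnected I)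
    (ψ ψ' ψ'' : ℝ → ℝ)
    (hpos : ∀ θ ∈ I, 0 < ψ θ)
    (hd1 : ∀ θ ∈ I, HasDerivAt ψ (ψ' θ) θ)
    (hd2 : ∀ θ ∈ I, HasDerivAt ψ' (ψ'' θ) θ)
    (hode : ∀ θ ∈ I, 2 * ((1/2 : ℝ) - 1) * P =
      -((1/2 : ℝ) - 1) * (ψ' θ) ^ 2 + (1/2 : ℝ) ^ 2 * (ψ θ) ^ 2 + (1/2 : ℝ) * (ψ'' θ) * (ψ θ))
    (c : ℝ) (hc : c ∈ I) (hc' : ψ' c = 0) :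
    ∀ θ ∈ I, ψ θ ^ 2 = (-4 * P) + (ψ c ^ 2 + 4 * P) * Real.cos (θ - c) ∧
      ψ θ = Real.sqrt ((-4 * P) + (ψ c ^ 2 + 4 * P) * Real.cos (θ - c)) :=
  lambda_half_classification_general P I hIconn ψ ψ' ψ'' hpos hd1 hd2 hode c hc hc'
end

section
/- Let λ > 0 and P ∈ ℝ, and let ψ be a strictly positive classical solution of the homogeneous Euler ODE with parameters (λ, P) on an open interval I. Then the Bernoulli function B(θ) = (2P + λ²ψ(θ)² + ψ′(θ)²) ψ(θ)^{2/λ − 2} is constant on I. -/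
/-! Differentiating, `B' = (2/λ) ψ' ψ^(2/λ - 3) R`, where `R` is the difference of the two sides
of the Euler ODE; so `B' = 0` on the interval, and `B` is constant there by the mean value
theorem. -/

open Real Set

noncomputable def eulerBernoulliFun (lam P : ℝ) (ψ ψ' : ℝ → ℝ) (θ : ℝ) : ℝ :=
  (2 * P + lam ^ 2 * ψ θ ^ 2 + ψ' θ ^ 2) * ψ θ ^ (2 / lam - 2)

theorem hasDerivAt_eulerBernoulliFun {lam P θ : ℝ} {ψ ψ' ψ'' : ℝ → ℝ} (hlam : lam ≠ 0)
    (hψ : ψ θ ≠ 0) (hd1 : HasDerivAt ψ (ψ' θ) θ) (hd2 : HasDerivAt ψ' (ψ'' θ) θ) :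
    HasDerivAt (eulerBernoulliFun lam P ψ ψ')
      (2 / lam * ψ' θ * ψ θ ^ (2 / lam - 3) *
        ((-(lam - 1) * ψ' θ ^ 2 + lam ^ 2 * ψ θ ^ 2 + lam * ψ'' θ * ψ θ) - 2 * (lam - 1) * P))
      θ := by
  have hfactor : HasDerivAt (fun θ => 2 * P + lam ^ 2 * ψ θ ^ 2 + ψ' θ ^ 2)
      (lam ^ 2 * (2 * ψ θ * ψ' θ) + 2 * ψ' θ * ψ'' θ) θ := by
    refine (((hd1.pow 2).const_mul (lam ^ 2)).const_add (2 * P)).add (hd2.pow 2)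
      |>.congr_deriv ?_
    ring
  have hpow : HasDerivAt (fun θ => ψ θ ^ (2 / lam - 2))
      (ψ' θ * (2 / lam - 2) * ψ θ ^ (2 / lam - 3)) θ := by
    convert hd1.rpow_const (Or.inl hψ) using 3
    ring
  have hsplit : ψ θ ^ (2 / lam - 2) = ψ θ ^ (2 / lam - 3) * ψ θ := by
    rw [← rpow_add_one hψ]
    congr 1
    ring
  refine (hfactor.mul hpow).congr_deriv ?_
  rw [hsplit]
  field_simp
  ring

/-- For a strictly positive classical solution `ψ` of the homogeneous Euler ODE
on an open interval, the Bernoulli function `B(θ) = (2P + λ²ψ² + ψ'²) ψ^{2/λ - 2}` is constant. -/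
theorem bernoulli_constant
    (lam P : ℝ) (hlam : 0 < lam)
    (a b : ℝ) (ψ ψ' ψ'' : ℝ → ℝ)
    (hpos : ∀ θ ∈ Set.Ioo a b, 0 < ψ θ)
    (hd1 : ∀ θ ∈ Set.Ioo a b, HasDerivAt ψ (ψ' θ) θ)
    (hd2 : ∀ θ ∈ Set.Ioo a b, HasDerivAt ψ' (ψ'' θ) θ)
    (hode : ∀ θ ∈ Set.Ioo a b, 2 * (lam - 1) * P =
      -(lam - 1) * (ψ' θ) ^ 2 + lam ^ 2 * (ψ θ) ^ 2 + lam * (ψ'' θ) * (ψ θ)) :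
    ∀ θ₁ ∈ Set.Ioo a b, ∀ θ₂ ∈ Set.Ioo a b,
      (2 * P + lam ^ 2 * (ψ θ₁) ^ 2 + (ψ' θ₁) ^ 2) * (ψ θ₁) ^ (2 / lam - 2) =
      (2 * P + lam ^ 2 * (ψ θ₂) ^ 2 + (ψ' θ₂) ^ 2) * (ψ θ₂) ^ (2 / lam - 2) := by
  have hderiv : ∀ θ ∈ Ioo a b, HasDerivAt (eulerBernoulliFun lam P ψ ψ') 0 θ := fun θ hθ => by
    have h := hasDerivAt_eulerBernoulliFun (P := P) hlam.ne' (hpos θ hθ).ne' (hd1 θ hθ) (hd2 θ hθ)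
    rwa [sub_eq_zero.2 (hode θ hθ).symm, mul_zero] at h
  intro θ₁ hθ₁ θ₂ hθ₂
  exact isOpen_Ioo.is_const_of_deriv_eq_zero isPreconnected_Ioo
    (fun θ hθ => (hderiv θ hθ).differentiableAt.differentiableWithinAt)
    (fun θ hθ => (hderiv θ hθ).deriv) hθ₁ hθ₂
end

section
/- Let 0 < λ < 1 and P ∈ ℝ. (i) If ψ : ℝ → ℝ is a strictly positive, twice differentiable, 2π-periodic classical solution of the homogeneous Euler ODE with parameters (λ, P), then its (constant) Bernoulli function satisfies B < 0. (ii) If (ψ, (a, b)) is a local solution of the homogeneous Euler ODE with parameters (λ, P), then its (constant) Bernoulli function satisfies B ≥ 0. -/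
/-!
The Bernoulli function `B` is a first integral of the ODE wherever `ψ > 0`.

(i) At a global minimum `m` of a positive periodic solution, `ψ' m = 0` and `ψ'' m ≥ 0`, so
the ODE gives `2 (λ - 1) P ≥ λ² ψ(m)²`; for `0 < λ < 1` this forces `2 P + λ² ψ(m)² < 0`,
i.e. `B < 0`.

(ii) On a local solution `B ≥ (2 P + λ² ψ²) ψ^(2/λ - 2)`, and the right-hand side tends to
`0` at the endpoint `a`, because the exponent `2/λ - 2` is positive for `λ < 1`.
-/

open Real Set Filter Topology

theorem Function.Periodic.exists_forall_le {f : ℝ → ℝ} {c : ℝ} (hp : Function.Periodic f c)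
    (hc : c ≠ 0) (hf : Continuous f) : ∃ m, ∀ x, f m ≤ f x := by
  obtain ⟨_, ⟨m, rfl⟩, hm⟩ :=
    (hp.compact_of_continuous hc hf).exists_isLeast (range_nonempty f)
  exact ⟨m, fun x => hm (mem_range_self x)⟩

theorem IsLocalMin.nonneg_of_hasDerivAt_of_hasDerivAt {f f' : ℝ → ℝ} {a f'' : ℝ}
    (hmin : IsLocalMin f a) (hf : ∀ x, HasDerivAt f (f' x) x) (hf' : HasDerivAt f' f'' a) :
    0 ≤ f'' := by
  by_contra! hneg
  have hcrit : f' a = 0 := hmin.hasDerivAt_eq_zero (hf a)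
  -- `f' x / (x - a) → f'' < 0`, so `f'` is negative just to the right of `a`.
  have hright : ∀ᶠ x in 𝓝[>] a, f' x < 0 ∧ f a ≤ f x := by
    filter_upwards [nhdsGT_le_nhdsNE a
        ((hasDerivAt_iff_tendsto_slope.1 hf').eventually_lt_const hneg),
      nhdsWithin_le_nhds hmin, self_mem_nhdsWithin] with x hslope hx (hax : a < x)
    rw [slope_def_field, hcrit, sub_zero] at hslope
    exact ⟨neg_of_div_neg_left hslope (sub_nonneg.2 hax.le), hx⟩
  obtain ⟨u, hau, hu⟩ := mem_nhdsGT_iff_exists_Ioo_subset.1 hright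
  obtain ⟨x, hx⟩ : (Ioo a u).Nonempty := nonempty_Ioo.2 hau
  obtain ⟨c, hc, hslope⟩ := exists_hasDerivAt_eq_slope f f' hx.1
    (fun y _ => (hf y).continuousAt.continuousWithinAt) (fun y _ => hf y)
  have hc' : f' c < 0 := (hu ⟨hc.1, hc.2.trans hx.2⟩).1
  rw [hslope] at hc'
  exact hc'.not_ge (div_nonneg (sub_nonneg.2 (hu hx).2) (sub_pos.2 hx.1).le)

section Bernoulli

variable {lam P : ℝ} {ψ ψ' ψ'' : ℝ → ℝ} {θ : ℝ}

def SolvesEulerODEAt (lam P : ℝ) (ψ ψ' ψ'' : ℝ → ℝ) (θ : ℝ) : Prop :=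
  2 * (lam - 1) * P = -(lam - 1) * ψ' θ ^ 2 + lam ^ 2 * ψ θ ^ 2 + lam * ψ'' θ * ψ θ

noncomputable def bernoulliFunction (lam P : ℝ) (ψ ψ' : ℝ → ℝ) (θ : ℝ) : ℝ :=
  (2 * P + lam ^ 2 * ψ θ ^ 2 + ψ' θ ^ 2) * ψ θ ^ (2 / lam - 2)

theorem hasDerivAt_bernoulliFunction (hlam : lam ≠ 0) (hpos : 0 < ψ θ)
    (h1 : HasDerivAt ψ (ψ' θ) θ) (h2 : HasDerivAt ψ' (ψ'' θ) θ)
    (hode : SolvesEulerODEAt lam P ψ ψ' ψ'' θ) :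
    HasDerivAt (bernoulliFunction lam P ψ ψ') 0 θ := by
  rw [SolvesEulerODEAt] at hode
  have hF : HasDerivAt (fun t => 2 * P + lam ^ 2 * ψ t ^ 2 + ψ' t ^ 2)
      (lam ^ 2 * (2 * ψ θ * ψ' θ) + 2 * ψ' θ * ψ'' θ) θ := by
    refine ((((h1.pow 2).const_mul (lam ^ 2)).const_add (2 * P)).add (h2.pow 2)).congr_deriv ?_
    ring
  have hR : HasDerivAt (fun t => ψ t ^ (2 / lam - 2))
      ((2 / lam - 2) * ψ θ ^ (2 / lam - 2 - 1) * ψ' θ) θ :=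
    (hasDerivAt_rpow_const (Or.inl hpos.ne')).comp θ h1
  refine (hF.mul hR).congr_deriv ?_
  have hsplit : ψ θ ^ (2 / lam - 2) = ψ θ ^ (2 / lam - 2 - 1) * ψ θ := by
    rw [← rpow_add_one hpos.ne', sub_add_cancel]
  rw [hsplit]
  generalize ψ θ ^ (2 / lam - 2 - 1) = K
  field_simp
  linear_combination (-2 * K * ψ' θ) * hode

theorem bernoulliFunction_neg_of_deriv_eq_zero (hlam0 : 0 < lam) (hlam1 : lam < 1)
    (hpos : 0 < ψ θ) (hcrit : ψ' θ = 0) (hconvex : 0 ≤ ψ'' θ)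
    (hode : SolvesEulerODEAt lam P ψ ψ' ψ'' θ) :
    bernoulliFunction lam P ψ ψ' θ < 0 := by
  have hcoef : 2 * P + lam ^ 2 * ψ θ ^ 2 + ψ' θ ^ 2 < 0 := by
    rw [SolvesEulerODEAt, hcrit] at hode
    rw [hcrit]
    nlinarith [mul_nonneg (mul_nonneg hlam0.le hconvex) hpos.le,
      mul_pos (pow_pos hlam0 3) (pow_pos hpos 2)]
  exact mul_neg_of_neg_of_pos hcoef (rpow_pos_of_pos hpos _)

theorem bernoulliFunction_nonneg_of_tendsto_zero {l : Filter ℝ} [l.NeBot] {c : ℝ}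
    (hlam0 : 0 < lam) (hlam1 : lam < 1) (hψ : Tendsto ψ l (𝓝 0)) (hpos : ∀ᶠ t in l, 0 < ψ t)
    (hconst : ∀ᶠ t in l, bernoulliFunction lam P ψ ψ' t = c) : 0 ≤ c := by
  have hexp : 0 < 2 / lam - 2 := by
    rw [sub_pos, lt_div_iff₀ hlam0]
    linarith
  have hlower :
      Tendsto (fun t => (2 * P + lam ^ 2 * ψ t ^ 2) * ψ t ^ (2 / lam - 2)) l (𝓝 0) := by
    simpa [zero_rpow hexp.ne'] using (((hψ.pow 2).const_mul (lam ^ 2)).const_add (2 * P)).mul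
      ((continuousAt_rpow_const 0 _ (Or.inr hexp.le)).tendsto.comp hψ)
  refine le_of_tendsto hlower ?_
  filter_upwards [hpos, hconst] with t ht hc
  rw [← hc, bernoulliFunction, add_mul _ (ψ' t ^ 2)]
  exact le_add_of_nonneg_right (mul_nonneg (sq_nonneg _) (rpow_pos_of_pos ht _).le)

end Bernoulli

/-- For `0 < λ < 1`: (i) a strictly positive `2π`-periodic classical solution of
the homogeneous Euler ODE has negative (constant) Bernoulli function; (ii) a local solution
(vanishing at the endpoints of its life-time) has nonnegative Bernoulli function. -/
theorem bernoulli_sign_lambda_lt_one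
    (lam P : ℝ) (hlam0 : 0 < lam) (hlam1 : lam < 1) :
    ((∀ ψ ψ' ψ'' : ℝ → ℝ,
      (∀ θ : ℝ, HasDerivAt ψ (ψ' θ) θ) →
      (∀ θ : ℝ, HasDerivAt ψ' (ψ'' θ) θ) →
      (∀ θ : ℝ, ψ (θ + 2 * Real.pi) = ψ θ) →
      (∀ θ : ℝ, 0 < ψ θ) →
      (∀ θ : ℝ, 2 * (lam - 1) * P =
        -(lam - 1) * (ψ' θ) ^ 2 + lam ^ 2 * (ψ θ) ^ 2 + lam * (ψ'' θ) * (ψ θ)) →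
      ∀ θ : ℝ, (2 * P + lam ^ 2 * (ψ θ) ^ 2 + (ψ' θ) ^ 2) * (ψ θ) ^ (2 / lam - 2) < 0)) ∧
    ((∀ a b : ℝ, a < b → ∀ ψ ψ' ψ'' : ℝ → ℝ,
      ContinuousOn ψ (Set.Icc a b) →
      ψ a = 0 → ψ b = 0 →
      (∀ θ ∈ Set.Ioo a b, 0 < ψ θ) →
      (∀ θ ∈ Set.Ioo a b, HasDerivAt ψ (ψ' θ) θ) →
      (∀ θ ∈ Set.Ioo a b, HasDerivAt ψ' (ψ'' θ) θ) →
      (∀ θ ∈ Set.Ioo a b, 2 * (lam - 1) * P =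
        -(lam - 1) * (ψ' θ) ^ 2 + lam ^ 2 * (ψ θ) ^ 2 + lam * (ψ'' θ) * (ψ θ)) →
      ∀ θ ∈ Set.Ioo a b,
        0 ≤ (2 * P + lam ^ 2 * (ψ θ) ^ 2 + (ψ' θ) ^ 2) * (ψ θ) ^ (2 / lam - 2))) := by
  refine ⟨fun ψ ψ' ψ'' h1 h2 hper hpos hode θ => ?_,
    fun a b hab ψ ψ' ψ'' hcont ha _ hpos h1 h2 hode θ hθ => ?_⟩
  · have hB t : HasDerivAt (bernoulliFunction lam P ψ ψ') 0 t :=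
      hasDerivAt_bernoulliFunction hlam0.ne' (hpos t) (h1 t) (h2 t) (hode t)
    obtain ⟨m, hm⟩ := Function.Periodic.exists_forall_le hper (by positivity)
      (continuous_iff_continuousAt.2 fun t => (h1 t).continuousAt)
    have hmin : IsLocalMin ψ m := Eventually.of_forall hm
    change bernoulliFunction lam P ψ ψ' θ < 0
    rw [is_const_of_deriv_eq_zero (fun t => (hB t).differentiableAt) (fun t => (hB t).deriv) θ m]
    exact bernoulliFunction_neg_of_deriv_eq_zero hlam0 hlam1 (hpos m)
      (hmin.hasDerivAt_eq_zero (h1 m)) (hmin.nonneg_of_hasDerivAt_of_hasDerivAt h1 (h2 m)) (hode m)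
  · have hB : ∀ t ∈ Ioo a b, HasDerivAt (bernoulliFunction lam P ψ ψ') 0 t := fun t ht =>
      hasDerivAt_bernoulliFunction hlam0.ne' (hpos t ht) (h1 t ht) (h2 t ht) (hode t ht)
    have hconst : ∀ t ∈ Ioo a b,
        bernoulliFunction lam P ψ ψ' t = bernoulliFunction lam P ψ ψ' θ := fun t ht =>
      isOpen_Ioo.is_const_of_deriv_eq_zero isPreconnected_Ioo
        (fun t ht => (hB t ht).differentiableAt.differentiableWithinAt)
        (fun t ht => (hB t ht).deriv) ht hθ
    have := left_nhdsWithin_Ioo_neBot hab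
    have hψ : Tendsto ψ (𝓝[Ioo a b] a) (𝓝 0) :=
      ha ▸ (hcont a (left_mem_Icc.2 hab.le)).mono_left (nhdsWithin_mono a Ioo_subset_Icc_self)
    exact bernoulliFunction_nonneg_of_tendsto_zero hlam0 hlam1 hψ
      (eventually_nhdsWithin_of_forall hpos) (eventually_nhdsWithin_of_forall hconst)
end

section
/- Let λ > 0 and P ∈ ℝ, and let ψ be a strictly positive classical solution of the homogeneous Euler ODE with parameters (λ, P) on an interval (a, b), with (constant) Bernoulli function B. Define ψ̃(θ) := ψ(θ/λ)^{1/λ} for θ ∈ (λa, λb). Then ψ̃ is a strictly positive classical solution of the homogeneous Euler ODE with parameters (λ̃, P̃) where λ̃ = 1/λ and P̃ = −B/(2λ⁴), and the Bernoulli function of ψ̃ equals B̃ = −2P/λ⁴. -/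
/-!
Write `y, u, w` for `ψ, ψ', ψ''` at `θ / λ` and `q = y ^ (1/λ - 2) > 0`. By the chain rule
`ψ̃ = q y²`, `ψ̃' = q y u / λ²` and `ψ̃'' = q ((1/λ - 1) u² + y w) / λ³`, while
`B = (2P + λ² y² + u²) q² y²`. In these variables the conjugate equation with `P̃ = -B/(2λ⁴)` is
the original equation multiplied by `q² y² / λ⁵`, and since `ψ̃ ^ (2λ - 2) = (q y)⁻²` the
conjugate Bernoulli function collapses to `-2P/λ⁴`.
-/

open Real Set

def eulerODE (lam P y u w : ℝ) : Prop :=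
  2 * (lam - 1) * P = -(lam - 1) * u ^ 2 + lam ^ 2 * y ^ 2 + lam * w * y

noncomputable def eulerBernoulli (lam P y u : ℝ) : ℝ :=
  (2 * P + lam ^ 2 * y ^ 2 + u ^ 2) * y ^ (2 / lam - 2)

/-- `conjDeriv` and `conjDeriv2` are `ψ̃'` and `ψ̃''` at `θ`, where `ψ̃ θ = ψ (θ / λ) ^ (1 / λ)`,
expressed through `(y, u, w) = (ψ, ψ', ψ'') (θ / λ)`. -/
noncomputable def conjDeriv (lam y u : ℝ) : ℝ :=
  y ^ (1 / lam - 1) * u / lam ^ 2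

noncomputable def conjDeriv2 (lam y u w : ℝ) : ℝ :=
  ((1 / lam - 1) * y ^ (1 / lam - 2) * u ^ 2 + y ^ (1 / lam - 1) * w) / lam ^ 3

section Pointwise

variable {lam P y u w : ℝ}

lemma rpow_eq_rpow_mul_pow (hy : 0 < y) {p r : ℝ} (n : ℕ) (h : p = r + n) :
    y ^ p = y ^ r * y ^ n := by
  rw [h, rpow_add_natCast hy.ne']

lemma exists_rpow_one_div_eq (hy : 0 < y) (lam : ℝ) :
    ∃ q > 0, y ^ (1 / lam - 2) = q ∧ y ^ (1 / lam - 1) = q * y ∧ y ^ (1 / lam) = q * y ^ 2 ∧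
      y ^ (2 / lam - 2) = q ^ 2 * y ^ 2 := by
  refine ⟨y ^ (1 / lam - 2), rpow_pos_of_pos hy _, rfl, ?_, ?_, ?_⟩
  · simpa using rpow_eq_rpow_mul_pow hy 1 (by ring : 1 / lam - 1 = (1 / lam - 2) + (1 : ℕ))
  · exact rpow_eq_rpow_mul_pow hy 2 (by ring)
  · rw [rpow_eq_rpow_mul_pow hy 2 (by ring : 2 / lam - 2 = (1 / lam - 2) * (2 : ℕ) + (2 : ℕ)),
      rpow_mul_natCast hy.le]

lemma eulerODE_conj (hlam : lam ≠ 0) (hy : 0 < y) (h : eulerODE lam P y u w) :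
    eulerODE (1 / lam) (-eulerBernoulli lam P y u / (2 * lam ^ 4)) (y ^ (1 / lam))
      (conjDeriv lam y u) (conjDeriv2 lam y u w) := by
  obtain ⟨q, -, hq, h1, h0, h2⟩ := exists_rpow_one_div_eq hy lam
  unfold eulerODE eulerBernoulli conjDeriv conjDeriv2 at *
  rw [hq, h0, h1, h2]
  field_simp
  linear_combination q ^ 2 * h

lemma eulerBernoulli_conj (hlam : lam ≠ 0) (hy : 0 < y) :
    eulerBernoulli (1 / lam) (-eulerBernoulli lam P y u / (2 * lam ^ 4)) (y ^ (1 / lam))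
      (conjDeriv lam y u) = -2 * P / lam ^ 4 := by
  have hinv : (y ^ (1 / lam)) ^ (2 / (1 / lam) - 2) = (y ^ (2 / lam - 2))⁻¹ := by
    rw [← rpow_mul hy.le, ← rpow_neg hy.le]
    congr 1
    field_simp
    ring
  obtain ⟨q, hq, -, h1, h0, h2⟩ := exists_rpow_one_div_eq hy lam
  unfold eulerBernoulli conjDeriv
  rw [hinv, h0, h1, h2]
  field_simp
  ring

end Pointwise

section Conjugate

variable {lam x u w : ℝ} {ψ ψ' : ℝ → ℝ}

lemma HasDerivAt.comp_div_const {𝕜 F : Type*} [NontriviallyNormedField 𝕜]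
    [NormedAddCommGroup F] [NormedSpace 𝕜 F] {f : 𝕜 → F} {f' : F} {x c : 𝕜}
    (hf : HasDerivAt f f' (x / c)) : HasDerivAt (fun t => f (t / c)) (c⁻¹ • f') x := by
  simpa [Function.comp_def, div_eq_mul_inv] using hf.scomp x ((hasDerivAt_id x).div_const c)

lemma hasDerivAt_conj (hψ : HasDerivAt ψ u (x / lam)) (hy : 0 < ψ (x / lam)) :
    HasDerivAt (fun t => ψ (t / lam) ^ (1 / lam)) (conjDeriv lam (ψ (x / lam)) u) x := by
  refine (hψ.comp_div_const.rpow_const (Or.inl hy.ne')).congr_deriv ?_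
  unfold conjDeriv
  simp only [smul_eq_mul]
  ring

lemma hasDerivAt_conjDeriv (hψ : HasDerivAt ψ (ψ' (x / lam)) (x / lam))
    (hψ' : HasDerivAt ψ' w (x / lam)) (hy : 0 < ψ (x / lam)) :
    HasDerivAt (fun t => conjDeriv lam (ψ (t / lam)) (ψ' (t / lam)))
      (conjDeriv2 lam (ψ (x / lam)) (ψ' (x / lam)) w) x := by
  refine (((hψ.comp_div_const.rpow_const (Or.inl hy.ne')).mul
    hψ'.comp_div_const).div_const (lam ^ 2)).congr_deriv ?_
  unfold conjDeriv2
  rw [show 1 / lam - 1 - 1 = 1 / lam - 2 by ring]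
  simp only [smul_eq_mul]
  ring

end Conjugate

theorem conjugacy_general
    (lam P B : ℝ) (hlam : 0 < lam)
    (a b : ℝ) (ψ ψ' ψ'' : ℝ → ℝ)
    (hpos : ∀ θ ∈ Set.Ioo a b, 0 < ψ θ)
    (hd1 : ∀ θ ∈ Set.Ioo a b, HasDerivAt ψ (ψ' θ) θ)
    (hd2 : ∀ θ ∈ Set.Ioo a b, HasDerivAt ψ' (ψ'' θ) θ)
    (hode : ∀ θ ∈ Set.Ioo a b, 2 * (lam - 1) * P =
      -(lam - 1) * (ψ' θ) ^ 2 + lam ^ 2 * (ψ θ) ^ 2 + lam * (ψ'' θ) * (ψ θ))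
    (hB : ∀ θ ∈ Set.Ioo a b,
      (2 * P + lam ^ 2 * (ψ θ) ^ 2 + (ψ' θ) ^ 2) * (ψ θ) ^ (2 / lam - 2) = B) :
    ∃ φ' φ'' : ℝ → ℝ,
      (∀ θ ∈ Set.Ioo (lam * a) (lam * b), 0 < ψ (θ / lam) ^ (1 / lam)) ∧
      (∀ θ ∈ Set.Ioo (lam * a) (lam * b),
        HasDerivAt (fun t => ψ (t / lam) ^ (1 / lam)) (φ' θ) θ) ∧
      (∀ θ ∈ Set.Ioo (lam * a) (lam * b), HasDerivAt φ' (φ'' θ) θ) ∧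
      (∀ θ ∈ Set.Ioo (lam * a) (lam * b),
        2 * (1 / lam - 1) * (-B / (2 * lam ^ 4)) =
          -(1 / lam - 1) * (φ' θ) ^ 2 + (1 / lam) ^ 2 * (ψ (θ / lam) ^ (1 / lam)) ^ 2 +
            (1 / lam) * (φ'' θ) * (ψ (θ / lam) ^ (1 / lam))) ∧
      (∀ θ ∈ Set.Ioo (lam * a) (lam * b),
        (2 * (-B / (2 * lam ^ 4)) + (1 / lam) ^ 2 * (ψ (θ / lam) ^ (1 / lam)) ^ 2 + (φ' θ) ^ 2) *
            (ψ (θ / lam) ^ (1 / lam)) ^ (2 / (1 / lam) - 2) =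
          -2 * P / lam ^ 4) := by
  have hmem : ∀ θ ∈ Set.Ioo (lam * a) (lam * b), θ / lam ∈ Set.Ioo a b := fun θ hθ =>
    ⟨(lt_div_iff₀ hlam).2 (by linarith [hθ.1]), (div_lt_iff₀ hlam).2 (by linarith [hθ.2])⟩
  refine ⟨fun θ => conjDeriv lam (ψ (θ / lam)) (ψ' (θ / lam)),
    fun θ => conjDeriv2 lam (ψ (θ / lam)) (ψ' (θ / lam)) (ψ'' (θ / lam)),
    fun θ hθ => rpow_pos_of_pos (hpos _ (hmem θ hθ)) _,
    fun θ hθ => hasDerivAt_conj (hd1 _ (hmem θ hθ)) (hpos _ (hmem θ hθ)),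
    fun θ hθ => hasDerivAt_conjDeriv (hd1 _ (hmem θ hθ)) (hd2 _ (hmem θ hθ)) (hpos _ (hmem θ hθ)),
    fun θ hθ => ?_, fun θ hθ => ?_⟩
  · rw [← hB _ (hmem θ hθ)]
    exact eulerODE_conj hlam.ne' (hpos _ (hmem θ hθ)) (hode _ (hmem θ hθ))
  · rw [← hB _ (hmem θ hθ)]
    exact eulerBernoulli_conj hlam.ne' (hpos _ (hmem θ hθ))

/-- Conjugacy: if `ψ` is a strictly positive classical solution of the
homogeneous Euler ODE on `(a,b)` with parameters `(λ, P)` and constant Bernoulli function `B`,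
then `ψ̃(θ) = ψ(θ/λ)^{1/λ}` is a strictly positive classical solution on `(λa, λb)` with
parameters `λ̃ = 1/λ`, `P̃ = -B/(2λ⁴)`, and its Bernoulli function equals `B̃ = -2P/λ⁴`. -/
theorem conjugacy
    (lam P B : ℝ) (hlam : 0 < lam)
    (a b : ℝ) (hab : a < b) (ψ ψ' ψ'' : ℝ → ℝ)
    (hpos : ∀ θ ∈ Set.Ioo a b, 0 < ψ θ)
    (hd1 : ∀ θ ∈ Set.Ioo a b, HasDerivAt ψ (ψ' θ) θ)
    (hd2 : ∀ θ ∈ Set.Ioo a b, HasDerivAt ψ' (ψ'' θ) θ)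
    (hode : ∀ θ ∈ Set.Ioo a b, 2 * (lam - 1) * P =
      -(lam - 1) * (ψ' θ) ^ 2 + lam ^ 2 * (ψ θ) ^ 2 + lam * (ψ'' θ) * (ψ θ))
    (hB : ∀ θ ∈ Set.Ioo a b,
      (2 * P + lam ^ 2 * (ψ θ) ^ 2 + (ψ' θ) ^ 2) * (ψ θ) ^ (2 / lam - 2) = B) :
    ∃ φ' φ'' : ℝ → ℝ,
      (∀ θ ∈ Set.Ioo (lam * a) (lam * b), 0 < ψ (θ / lam) ^ (1 / lam)) ∧
      (∀ θ ∈ Set.Ioo (lam * a) (lam * b),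
        HasDerivAt (fun t => ψ (t / lam) ^ (1 / lam)) (φ' θ) θ) ∧
      (∀ θ ∈ Set.Ioo (lam * a) (lam * b), HasDerivAt φ' (φ'' θ) θ) ∧
      (∀ θ ∈ Set.Ioo (lam * a) (lam * b),
        2 * (1 / lam - 1) * (-B / (2 * lam ^ 4)) =
          -(1 / lam - 1) * (φ' θ) ^ 2 + (1 / lam) ^ 2 * (ψ (θ / lam) ^ (1 / lam)) ^ 2 +
            (1 / lam) * (φ'' θ) * (ψ (θ / lam) ^ (1 / lam))) ∧
      (∀ θ ∈ Set.Ioo (lam * a) (lam * b),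
        (2 * (-B / (2 * lam ^ 4)) + (1 / lam) ^ 2 * (ψ (θ / lam) ^ (1 / lam)) ^ 2 + (φ' θ) ^ 2) *
            (ψ (θ / lam) ^ (1 / lam)) ^ (2 / (1 / lam) - 2) =
          -2 * P / lam ^ 4) :=
  conjugacy_general lam P B hlam a b ψ ψ' ψ'' hpos hd1 hd2 hode hB
end

section
/- For λ > 0 define W(x) := −((λ−2)/λ) x^{2−2/λ} + x^{2−4/λ} − 1 + ((λ−2)/λ) x^{−2/λ} + ((λ−1)(λ−2)/6) x³ (1 − x^{−2/λ})³ for x > 0. Then: (a) if λ > 2, W(x) ≥ 0 for all x ∈ (0, (λ/(λ−1))^{λ/2}); (b) if 4/3 ≤ λ < 2, W(x) ≤ 0 for all x ∈ (0, (λ/(λ−1))^{λ/2}). -/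
open Real Set

/-!
Put `s = λ/2` and `τ = x^{-2/λ}`. Then `W(x) = (2/λ) x³ G(s, τ)` with
`G(s, t) = K(1 - t)³ - t^{s+1} r(t)`, `K = s(s-1)(2s-1)/3` and
`r(τ) = sτ^{2s-1} - (s-1)τ^{2s} - 1 + s - sτ`. The function `r` vanishes to second order at
`τ = 1` and `r''(τ) = 6Kτ^{2s-3}(1 - τ)`. Hence, for fixed `t`, the function
`τ ↦ K (K(1 - τ)³ - t^{s+1} r(τ))` has a double zero at `τ = 1` and second derivative
`6K²(1 - τ)(1 - (t/τ)^{s+1} τ^{3s-2})`, which is nonnegative for `τ` between `1` and `t`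
as soon as `s ≥ 2/3`. By convexity its value at `τ = t`, namely `K G(s, t)`, is nonnegative,
so `G` has the sign of `K`, i.e. of `λ - 2` when `λ > 1`.
-/

lemma ConvexOn.nonneg_of_hasDerivAt_eq_zero {S : Set ℝ} {g : ℝ → ℝ} {a b : ℝ}
    (hg : ConvexOn ℝ S g) (ha : a ∈ S) (hb : b ∈ S) (hga : g a = 0)
    (hg'a : HasDerivAt g 0 a) : 0 ≤ g b := by
  rcases lt_trichotomy a b with hab | rfl | hba
  · have := hg.le_slope_of_hasDerivAt ha hb hab hg'a
    rwa [slope_def_field, hga, sub_zero, le_div_iff₀ (sub_pos.2 hab), zero_mul] at this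
  · exact hga.ge
  · have := hg.slope_le_of_hasDerivAt hb ha hba hg'a
    rwa [slope_def_field, hga, zero_sub, div_le_iff₀ (sub_pos.2 hba), zero_mul,
      neg_nonpos] at this

lemma nonneg_of_hasDerivAt_two {g g' g'' : ℝ → ℝ} {a b : ℝ}
    (hg : ∀ x ∈ uIcc a b, HasDerivAt g (g' x) x)
    (hg' : ∀ x ∈ uIcc a b, HasDerivAt g' (g'' x) x)
    (hg'' : ∀ x ∈ uIoo a b, 0 ≤ g'' x) (hga : g a = 0) (hg'a : g' a = 0) : 0 ≤ g b := by
  have hint : interior (uIcc a b) = uIoo a b := by rw [uIcc, interior_Icc, uIoo]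
  have hconv : ConvexOn ℝ (uIcc a b) g :=
    convexOn_of_hasDerivWithinAt2_nonneg (convex_uIcc a b)
      (fun x hx ↦ (hg x hx).continuousAt.continuousWithinAt)
      (fun x hx ↦ (hg x (interior_subset hx)).hasDerivWithinAt)
      (fun x hx ↦ (hg' x (interior_subset hx)).hasDerivWithinAt) (hint ▸ hg'')
  exact hconv.nonneg_of_hasDerivAt_eq_zero left_mem_uIcc right_mem_uIcc hga
    (hg'a ▸ hg a left_mem_uIcc)

namespace ChiconeCima

noncomputable def K (s : ℝ) : ℝ := s * (s - 1) * (2 * s - 1) / 3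

noncomputable def r (s τ : ℝ) : ℝ :=
  s * τ ^ (2 * s - 1) - (s - 1) * τ ^ (2 * s) - 1 + s - s * τ

noncomputable def G (s t : ℝ) : ℝ := K s * (1 - t) ^ 3 - t ^ (s + 1) * r s t

variable {s t τ : ℝ}

lemma hasDerivAt_r (hτ : τ ≠ 0) :
    HasDerivAt (r s)
      (s * ((2 * s - 1) * τ ^ (2 * s - 2) - (2 * s - 2) * τ ^ (2 * s - 1) - 1)) τ := by
  have h₁ := hasDerivAt_rpow_const (p := 2 * s - 1) (Or.inl hτ)
  have h₂ := hasDerivAt_rpow_const (p := 2 * s) (Or.inl hτ)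
  rw [show 2 * s - 1 - 1 = 2 * s - 2 by ring] at h₁
  exact (((((h₁.const_mul s).sub (h₂.const_mul (s - 1))).sub_const 1).add_const s).sub
    ((hasDerivAt_id τ).const_mul s)).congr_deriv (by ring)

lemma hasDerivAt_deriv_r (hτ : τ ≠ 0) :
    HasDerivAt
      (fun τ ↦ s * ((2 * s - 1) * τ ^ (2 * s - 2) - (2 * s - 2) * τ ^ (2 * s - 1) - 1))
      (6 * K s * τ ^ (2 * s - 3) * (1 - τ)) τ := by
  have h₁ := hasDerivAt_rpow_const (p := 2 * s - 2) (Or.inl hτ)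
  have h₂ := hasDerivAt_rpow_const (p := 2 * s - 1) (Or.inl hτ)
  rw [show 2 * s - 2 - 1 = 2 * s - 3 by ring] at h₁
  rw [show 2 * s - 1 - 1 = 2 * s - 3 + 1 by ring, rpow_add_one hτ] at h₂
  exact ((((h₁.const_mul (2 * s - 1)).sub (h₂.const_mul (2 * s - 2))).sub_const 1).const_mul
    s).congr_deriv (by rw [K]; ring)

lemma one_sub_mul_one_sub_rpow_nonneg (hs : 2 / 3 ≤ s) (ht : 0 < t) (hτ : τ ∈ uIcc 1 t) :
    0 ≤ (1 - τ) * (1 - t ^ (s + 1) * τ ^ (2 * s - 3)) := by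
  have hτ0 : 0 < τ := lt_of_lt_of_le (lt_min one_pos ht) hτ.1
  have hsplit : t ^ (s + 1) * τ ^ (2 * s - 3) = (t / τ) ^ (s + 1) * τ ^ (3 * s - 2) := by
    rw [div_rpow ht.le hτ0.le, div_mul_eq_mul_div, mul_div_assoc, ← rpow_sub hτ0]
    ring_nf
  rw [hsplit]
  rcases le_total t 1 with ht1 | ht1
  · rw [uIcc_of_ge ht1] at hτ
    have hle : (t / τ) ^ (s + 1) * τ ^ (3 * s - 2) ≤ 1 :=
      mul_le_one₀ (rpow_le_one (by positivity) ((div_le_one hτ0).2 hτ.1) (by linarith))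
        (by positivity) (rpow_le_one hτ0.le hτ.2 (by linarith))
    exact mul_nonneg (by linarith [hτ.2]) (by linarith)
  · rw [uIcc_of_le ht1] at hτ
    have hge : 1 ≤ (t / τ) ^ (s + 1) * τ ^ (3 * s - 2) :=
      one_le_mul_of_one_le_of_one_le (one_le_rpow ((one_le_div hτ0).2 hτ.2) (by linarith))
        (one_le_rpow hτ.1 (by linarith))
    exact mul_nonneg_of_nonpos_of_nonpos (by linarith [hτ.1]) (by linarith)

lemma K_mul_G_nonneg (hs : 2 / 3 ≤ s) (ht : 0 < t) : 0 ≤ K s * G s t := by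
  have hpos : ∀ τ ∈ uIcc 1 t, τ ≠ 0 := fun τ hτ ↦
    (lt_of_lt_of_le (lt_min one_pos ht) hτ.1).ne'
  refine nonneg_of_hasDerivAt_two (a := 1)
    (g := fun τ ↦ K s * (K s * (1 - τ) ^ 3 - t ^ (s + 1) * r s τ))
    (g' := fun τ ↦ K s * (K s * (-3 * (1 - τ) ^ 2) - t ^ (s + 1) *
      (s * ((2 * s - 1) * τ ^ (2 * s - 2) - (2 * s - 2) * τ ^ (2 * s - 1) - 1))))
    (g'' := fun τ ↦ 6 * K s ^ 2 * ((1 - τ) * (1 - t ^ (s + 1) * τ ^ (2 * s - 3))))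
    (fun τ hτ ↦ ?_) (fun τ hτ ↦ ?_) (fun τ hτ ↦ ?_) ?_ ?_
  · have hcube : HasDerivAt (fun τ ↦ (1 - τ) ^ 3) (-3 * (1 - τ) ^ 2) τ := by
      simpa using ((hasDerivAt_id τ).const_sub 1).fun_pow 3
    exact (((hcube.const_mul (K s)).sub ((hasDerivAt_r (hpos τ hτ)).const_mul _)).const_mul _)
  · have hsq : HasDerivAt (fun τ ↦ -3 * (1 - τ) ^ 2) (6 * (1 - τ)) τ := by
      exact ((((hasDerivAt_id τ).const_sub 1).fun_pow 2).const_mul (-3)).congr_deriv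
        (by simp only [id_eq, Nat.cast_ofNat]; ring)
    exact (((hsq.const_mul (K s)).sub ((hasDerivAt_deriv_r (hpos τ hτ)).const_mul _)).const_mul
      _).congr_deriv (by ring)
  · exact mul_nonneg (by positivity)
      (one_sub_mul_one_sub_rpow_nonneg hs ht (uIoo_subset_uIcc_self hτ))
  · simp [r]
  · norm_num

lemma K_pos (hs : 1 < s) : 0 < K s := by
  unfold K
  have : 0 < s - 1 := by linarith
  have : 0 < 2 * s - 1 := by linarith
  have : 0 < s := by linarith
  positivity

lemma K_neg (hs₀ : 1 / 2 < s) (hs₁ : s < 1) : K s < 0 := by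
  unfold K
  have : 0 < s * (1 - s) * (2 * s - 1) :=
    mul_pos (mul_pos (by linarith) (by linarith)) (by linarith)
  linarith

lemma G_nonneg (hs : 1 < s) (ht : 0 < t) : 0 ≤ G s t :=
  nonneg_of_mul_nonneg_right (K_mul_G_nonneg (by linarith) ht) (K_pos hs)

lemma G_nonpos (hs₀ : 2 / 3 ≤ s) (hs₁ : s < 1) (ht : 0 < t) : G s t ≤ 0 :=
  nonpos_of_mul_nonneg_right (K_mul_G_nonneg hs₀ ht) (K_neg (by linarith) hs₁)

lemma formula_eq_G {lam x : ℝ} (hlam : 0 < lam) (hx : 0 < x) :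
    -((lam - 2) / lam) * x ^ (2 - 2 / lam) + x ^ (2 - 4 / lam) - 1 +
        ((lam - 2) / lam) * x ^ (-(2 / lam)) +
        ((lam - 1) * (lam - 2) / 6) * x ^ (3 : ℕ) * (1 - x ^ (-(2 / lam))) ^ (3 : ℕ) =
      2 / lam * x ^ 3 * G (lam / 2) (x ^ (-(2 / lam))) := by
  set τ := x ^ (-(2 / lam)) with hτ
  have hτ0 : 0 < τ := rpow_pos_of_pos hx _
  have hτs : τ ^ (lam / 2) = x⁻¹ := by
    rw [hτ, ← rpow_mul hx.le, show -(2 / lam) * (lam / 2) = -1 by field_simp, rpow_neg_one]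
  have h₁ : x ^ (2 - 2 / lam) = x ^ 2 * τ := by
    rw [sub_eq_add_neg, rpow_add hx, rpow_two]
  have h₂ : x ^ (2 - 4 / lam) = x ^ 2 * τ ^ 2 := by
    rw [show 2 - 4 / lam = 2 + -(2 / lam) * 2 by ring, rpow_add hx, rpow_mul hx.le, rpow_two,
      rpow_two]
  unfold G K r
  rw [h₁, h₂, show 2 * (lam / 2) = lam / 2 + lam / 2 by ring, rpow_sub_one hτ0.ne',
    rpow_add hτ0, rpow_add hτ0, rpow_one, hτs]
  field_simp
  ring

end ChiconeCima

open ChiconeCima in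
/-- The Chicone–Cima monotonicity quantity
`W(x) = -((λ-2)/λ)x^{2-2/λ} + x^{2-4/λ} - 1 + ((λ-2)/λ)x^{-2/λ}
  + ((λ-1)(λ-2)/6)x³(1 - x^{-2/λ})³`
satisfies: `W ≥ 0` on `(0, (λ/(λ-1))^{λ/2})` if `λ > 2`, and `W ≤ 0` there if `4/3 ≤ λ < 2`. -/
theorem chicone_cima_W_sign
    (lam : ℝ) (hlam : 0 < lam) (W : ℝ → ℝ)
    (hW : ∀ x : ℝ, 0 < x → W x =
      -((lam - 2) / lam) * x ^ (2 - 2 / lam) + x ^ (2 - 4 / lam) - 1 +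
        ((lam - 2) / lam) * x ^ (-(2 / lam)) +
        ((lam - 1) * (lam - 2) / 6) * x ^ (3 : ℕ) * (1 - x ^ (-(2 / lam))) ^ (3 : ℕ)) :
    (2 < lam → ∀ x ∈ Set.Ioo (0 : ℝ) ((lam / (lam - 1)) ^ (lam / 2)), 0 ≤ W x) ∧
    (4/3 ≤ lam → lam < 2 → ∀ x ∈ Set.Ioo (0 : ℝ) ((lam / (lam - 1)) ^ (lam / 2)), W x ≤ 0) := by
  have hWG : ∀ x > 0, W x = 2 / lam * x ^ 3 * G (lam / 2) (x ^ (-(2 / lam))) :=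
    fun x hx ↦ (hW x hx).trans (formula_eq_G hlam hx)
  refine ⟨fun hl x ⟨hx, _⟩ ↦ ?_, fun hl₁ hl₂ x ⟨hx, _⟩ ↦ ?_⟩ <;> rw [hWG x hx]
  · exact mul_nonneg (by positivity) (G_nonneg (by linarith) (by positivity))
  · exact mul_nonpos_of_nonneg_of_nonpos (by positivity)
      (G_nonpos (by linarith) (by linarith) (by positivity))
end

section
/- Let u₁ ∈ ℝ with u₁ ≠ 0 and P ∈ ℝ. If u₂ : ℝ → ℝ is differentiable, 2π-periodic, and satisfies the Riccati equation u₁ u₂′(θ) = u₂(θ)² + u₁² + 2P for all θ ∈ ℝ, then u₂ is constant. Consequently, every (−1)-homogeneous stationary solution of the 2D Euler equations of the form u(r, θ) = r^{−1}[u₁(θ)(−sin θ, cos θ) + u₂(θ)(cos θ, sin θ)] with constant pressure coefficient has both u₁ and u₂ constant. -/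
open Real Set

section RiccatiAux
open MeasureTheory intervalIntegral

lemma pos_integral_aux (g : ℝ → ℝ) (hg : Continuous g) (hnn : ∀ x, 0 ≤ g x)
    {c a b : ℝ} (hc : 0 < g c) (ha : a < c) (hb : c < b) :
    0 < ∫ x in a..b, g x := by
  obtain ⟨δ, hδ, hball⟩ := Metric.isOpen_iff.1 (isOpen_lt continuous_const hg) c hc
  set c1 := max a (c - δ/2) with hc1
  set c2 := min b (c + δ/2) with hc2
  have h1 : c1 < c := max_lt ha (by linarith)
  have h2 : c < c2 := lt_min hb (by linarith)
  have hac1 : a ≤ c1 := le_max_left _ _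
  have hc2b : c2 ≤ b := min_le_left _ _
  have hpos : ∀ x ∈ Ioo c1 c2, 0 < g x := by
    intro x hx
    apply hball
    rw [Real.ball_eq_Ioo]
    have h3 : c - δ/2 ≤ c1 := le_max_right _ _
    have h4 : c2 ≤ c + δ/2 := min_le_right _ _
    exact ⟨by linarith [hx.1], by linarith [hx.2]⟩
  have hint : ∀ x y : ℝ, IntervalIntegrable g volume x y := fun x y => hg.intervalIntegrable x y
  have e1 : (∫ x in a..c1, g x) + (∫ x in c1..b, g x) = ∫ x in a..b, g x :=
    integral_add_adjacent_intervals (hint _ _) (hint _ _)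
  have e2 : (∫ x in c1..c2, g x) + (∫ x in c2..b, g x) = ∫ x in c1..b, g x :=
    integral_add_adjacent_intervals (hint _ _) (hint _ _)
  have n1 : 0 ≤ ∫ x in a..c1, g x :=
    intervalIntegral.integral_nonneg hac1 (fun x _ => hnn x)
  have n2 : 0 ≤ ∫ x in c2..b, g x :=
    intervalIntegral.integral_nonneg hc2b (fun x _ => hnn x)
  have pmid : 0 < ∫ x in c1..c2, g x :=
    intervalIntegral_pos_of_pos_on (hint _ _) hpos (h1.trans h2)
  linarith

lemma riccati_const (P u₁ : ℝ) (hu₁ : u₁ ≠ 0) (u₂ u₂' : ℝ → ℝ)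
    (hderiv : ∀ θ : ℝ, HasDerivAt u₂ (u₂' θ) θ)
    (hper : ∀ θ : ℝ, u₂ (θ + 2 * Real.pi) = u₂ θ)
    (heq : ∀ θ : ℝ, u₁ * u₂' θ = (u₂ θ) ^ 2 + u₁ ^ 2 + 2 * P) :
    ∀ θ₁ θ₂ : ℝ, u₂ θ₁ = u₂ θ₂ := by
  set C := u₁ ^ 2 + 2 * P with hC
  have hdiff : Differentiable ℝ u₂ := fun θ => (hderiv θ).differentiableAt
  have hcont : Continuous u₂ := hdiff.continuous
  have hperiodic : Function.Periodic u₂ (2 * π) := hper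
  have h2pi : (0:ℝ) < 2 * π := by positivity
  -- global max and min
  obtain ⟨a, haI, hamax⟩ := isCompact_Icc.exists_isMaxOn (⟨0, by constructor <;> linarith⟩ :
      (Icc (0:ℝ) (2*π)).Nonempty) hcont.continuousOn
  obtain ⟨b, hbI, hbmin⟩ := isCompact_Icc.exists_isMinOn (⟨0, by constructor <;> linarith⟩ :
      (Icc (0:ℝ) (2*π)).Nonempty) hcont.continuousOn
  have hmax : ∀ x, u₂ x ≤ u₂ a := by
    intro x
    obtain ⟨y, hy, hxy⟩ := hperiodic.exists_mem_Ico₀ h2pi x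
    rw [hxy]
    exact hamax (Ico_subset_Icc_self hy)
  have hmin : ∀ x, u₂ b ≤ u₂ x := by
    intro x
    obtain ⟨y, hy, hxy⟩ := hperiodic.exists_mem_Ico₀ h2pi x
    rw [hxy]
    exact hbmin (Ico_subset_Icc_self hy)
  have hda : u₂' a = 0 :=
    (IsLocalMax.hasDerivAt_eq_zero (Filter.Eventually.of_forall hmax) (hderiv a))
  have hdb : u₂' b = 0 :=
    (IsLocalMin.hasDerivAt_eq_zero (Filter.Eventually.of_forall hmin) (hderiv b))
  have ha2 : (u₂ a) ^ 2 = -C := by have h := heq a; rw [hda] at h; linarith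
  have hb2 : (u₂ b) ^ 2 = -C := by have h := heq b; rw [hdb] at h; linarith
  rcases eq_or_lt_of_le (hmin a) with hab | hab
  · -- min = max : constant
    intro θ₁ θ₂
    have h1 := le_antisymm (hmax θ₁) (hab ▸ hmin θ₁)
    have h2 := le_antisymm (hmax θ₂) (hab ▸ hmin θ₂)
    rw [h1, h2]
  · exfalso
    have hfac : (u₂ a - u₂ b) * (u₂ a + u₂ b) = 0 := by
      have h : (u₂ a) ^ 2 = (u₂ b) ^ 2 := by rw [ha2, hb2]
      linear_combination h
    have hsum : u₂ a + u₂ b = 0 := by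
      rcases mul_eq_zero.1 hfac with h | h
      · exact absurd (sub_eq_zero.1 h) (ne_of_gt hab)
      · exact h
    have hka : 0 < u₂ a := by nlinarith
    -- IVT: find t with u₂ t = 0
    have h0mem : (0:ℝ) ∈ uIcc (u₂ b) (u₂ a) := by
      rw [uIcc_of_le (hmin a)]
      exact ⟨by linarith, le_of_lt hka⟩
    obtain ⟨t, _, ht0⟩ := intermediate_value_uIcc (hcont.continuousOn (s := uIcc b a)) h0mem
    -- continuity of u₂'
    have hu2'eq : ∀ θ, u₂' θ = ((u₂ θ) ^ 2 + C) / u₁ := by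
      intro θ
      field_simp
      linarith [heq θ]
    have hcont' : Continuous u₂' := by
      have h : u₂' = fun θ => ((u₂ θ) ^ 2 + C) / u₁ := funext hu2'eq
      rw [h]
      fun_prop
    -- integral of u₂' over a period is zero
    have hrl : u₂ (t + π) = u₂ (t - π) := by
      have h := hper (t - π)
      rw [show t - π + 2 * π = t + π by ring] at h
      exact h
    have hI0 : (∫ x in (t - π)..(t + π), u₂' x) = 0 := by
      rw [intervalIntegral.integral_eq_sub_of_hasDerivAt (fun x _ => hderiv x)
        (hcont'.intervalIntegrable _ _), hrl, sub_self]
    set g : ℝ → ℝ := fun x => -((u₂ x) ^ 2 + C) with hg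
    have hgI : (∫ x in (t - π)..(t + π), g x) = 0 := by
      have h1 : (∫ x in (t - π)..(t + π), ((u₂ x) ^ 2 + C)) =
          ∫ x in (t - π)..(t + π), u₁ * u₂' x :=
        intervalIntegral.integral_congr (fun x _ => by rw [hC]; linarith [heq x])
      rw [hg]
      rw [intervalIntegral.integral_neg, h1, intervalIntegral.integral_const_mul, hI0, mul_zero,
        neg_zero]
    have hnn : ∀ x, 0 ≤ g x := by
      intro x
      have : (u₂ x) ^ 2 ≤ (u₂ a) ^ 2 := sq_le_sq' (by linarith [hmin x]) (hmax x)
      simp only [hg]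
      nlinarith
    have hgt : 0 < g t := by
      simp only [hg, ht0]
      nlinarith
    have hgc : Continuous g := by fun_prop
    have := pos_integral_aux g hgc hnn (c := t) (a := t - π) (b := t + π) hgt (by linarith [pi_pos]) (by linarith [pi_pos])
    linarith [hgI]
end RiccatiAux

/-- For `u₁ ≠ 0`, every differentiable `2π`-periodic solution of the Riccati
equation `u₁u₂' = u₂² + u₁² + 2P` is constant. Consequently, every `(-1)`-homogeneous stationary
Euler flow `u = r^{-1}[u₁(θ)τ + u₂(θ)ν]` (for which incompressibility forces `u₁' = 0` and the
Euler equation reduces to the Riccati equation) has both `u₁` and `u₂` constant. -/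
theorem riccati_no_periodic
    (P : ℝ) :
    ((∀ u₁ : ℝ, u₁ ≠ 0 → ∀ u₂ u₂' : ℝ → ℝ,
      (∀ θ : ℝ, HasDerivAt u₂ (u₂' θ) θ) →
      (∀ θ : ℝ, u₂ (θ + 2 * Real.pi) = u₂ θ) →
      (∀ θ : ℝ, u₁ * u₂' θ = (u₂ θ) ^ 2 + u₁ ^ 2 + 2 * P) →
      ∀ θ₁ θ₂ : ℝ, u₂ θ₁ = u₂ θ₂)) ∧
    ((∀ u₁ u₁' u₂ u₂' : ℝ → ℝ,
      (∀ θ : ℝ, HasDerivAt u₁ (u₁' θ) θ) →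
      (∀ θ : ℝ, HasDerivAt u₂ (u₂' θ) θ) →
      (∀ θ : ℝ, u₁ (θ + 2 * Real.pi) = u₁ θ) →
      (∀ θ : ℝ, u₂ (θ + 2 * Real.pi) = u₂ θ) →
      (∀ θ : ℝ, u₁' θ = 0) →
      (∀ θ : ℝ, u₁ θ * u₂' θ = (u₂ θ) ^ 2 + (u₁ θ) ^ 2 + 2 * P) →
      (∀ θ₁ θ₂ : ℝ, u₁ θ₁ = u₁ θ₂) ∧ (∀ θ₁ θ₂ : ℝ, u₂ θ₁ = u₂ θ₂))) := by
  constructor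
  · exact fun u₁ hu₁ u₂ u₂' hd hp he => riccati_const P u₁ hu₁ u₂ u₂' hd hp he
  · intro u₁ u₁' u₂ u₂' h1d h2d h1p h2p h1'0 heq
    have h1diff : Differentiable ℝ u₁ := fun θ => (h1d θ).differentiableAt
    have h1const : ∀ θ₁ θ₂ : ℝ, u₁ θ₁ = u₁ θ₂ := fun θ₁ θ₂ =>
      is_const_of_deriv_eq_zero h1diff (fun x => by rw [(h1d x).deriv, h1'0 x]) θ₁ θ₂
    refine ⟨h1const, ?_⟩
    by_cases hc : u₁ 0 = 0
    · -- u₁ ≡ 0 : then u₂² is constant, and by IVT u₂ is constant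
      have h0 : ∀ θ, u₁ θ = 0 := fun θ => (h1const θ 0).trans hc
      have hsq : ∀ θ, (u₂ θ) ^ 2 = -(2 * P) := fun θ => by
        have h := heq θ; rw [h0 θ] at h; linarith
      intro θ₁ θ₂
      by_contra hne
      have hfac : (u₂ θ₁ - u₂ θ₂) * (u₂ θ₁ + u₂ θ₂) = 0 := by
        linear_combination (hsq θ₁) - (hsq θ₂)
      have hsum : u₂ θ₁ + u₂ θ₂ = 0 := by
        rcases mul_eq_zero.1 hfac with h | h
        · exact absurd (sub_eq_zero.1 h) hne
        · exact h
      have hdiff2 : Differentiable ℝ u₂ := fun θ => (h2d θ).differentiableAt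
      have hcont : Continuous u₂ := hdiff2.continuous
      have h0mem : (0:ℝ) ∈ uIcc (u₂ θ₁) (u₂ θ₂) := by
        rcases le_total 0 (u₂ θ₁) with h | h
        · exact mem_uIcc.mpr (Or.inr ⟨by linarith, h⟩)
        · exact mem_uIcc.mpr (Or.inl ⟨h, by linarith⟩)
      obtain ⟨t, _, ht⟩ := intermediate_value_uIcc (hcont.continuousOn (s := uIcc θ₁ θ₂)) h0mem
      have htsq := hsq t
      rw [ht] at htsq
      have h1 : u₂ θ₁ = 0 := by nlinarith [hsq θ₁]
      have h2 : u₂ θ₂ = 0 := by linarith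
      exact hne (by rw [h1, h2])
    · -- u₁ ≡ u₁ 0 ≠ 0 : apply the Riccati lemma
      apply riccati_const P (u₁ 0) hc u₂ u₂' h2d h2p
      intro θ
      have h := heq θ
      rw [h1const θ 0] at h
      exact h
end

section
/- Let λ > 0 and P ∈ ℝ, and let (ψ, (a, b)) be a local solution of the homogeneous Euler ODE with parameters (λ, P). Then ψ is symmetric about the midpoint c = (a+b)/2, i.e. ψ(c + s) = ψ(c − s) for all s ∈ [0, (b−a)/2], and c is the unique critical point of ψ in (a, b). Consequently, for every ε ∈ (0, (b−a)/2) the energy-flux integral satisfies ∫_{a+ε}^{b−ε} ψ′(θ)³ dθ = 0; in particular, for λ = 2/3 (the Onsager-critical homogeneity) the flux integral of each local solution vanishes. -/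
/-!
Written as a first-order system `(ψ, ψ')' = F(ψ, ψ')`, the Euler ODE has a vector field `F` that
is `C¹` wherever `ψ ≠ 0`, and it is reversible: `θ ↦ (ψ (2m - θ), -ψ' (2m - θ))` is again a
solution. At a critical point `m` the two solutions agree, so by uniqueness `ψ` is symmetric about
`m` on the largest interval where both are defined, and by continuity on its closure. As `ψ`
vanishes at `a` and `b` but nowhere in between, this forces `m = (a + b) / 2`; Rolle's theorem
provides a critical point. Then `ψ'`, hence `ψ'³`, is odd about the midpoint, so its integral over
any symmetric interval vanishes.
-/

open Set Filter Topology

section ODE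

variable {E : Type*} [NormedAddCommGroup E] [NormedSpace ℝ E] {v : E → E} {f g : ℝ → E}

theorem ODE_solution_eventuallyEq_of_contDiffAt {t₀ : ℝ} (hv : ContDiffAt ℝ 1 v (f t₀))
    (hf : ∀ᶠ t in 𝓝 t₀, HasDerivAt f (v (f t)) t) (hg : ∀ᶠ t in 𝓝 t₀, HasDerivAt g (v (g t)) t)
    (heq : f t₀ = g t₀) : f =ᶠ[𝓝 t₀] g := by
  obtain ⟨K, U, hU, hlip⟩ := hv.exists_lipschitzOnWith
  have hfU : ∀ᶠ t in 𝓝 t₀, f t ∈ U := hf.self_of_nhds.continuousAt hU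
  have hgU : ∀ᶠ t in 𝓝 t₀, g t ∈ U := hg.self_of_nhds.continuousAt (heq ▸ hU)
  exact ODE_solution_unique_of_eventually (v := fun _ ↦ v) (s := fun _ ↦ U)
    (.of_forall fun _ ↦ hlip) (hf.and hfU) (hg.and hgU) heq

theorem ODE_solution_eqOn_of_contDiffAt {s : Set ℝ} {t₀ : ℝ} (hs : IsPreconnected s)
    (hso : IsOpen s) (hv : ∀ t ∈ s, ContDiffAt ℝ 1 v (f t))
    (hf : ∀ t ∈ s, HasDerivAt f (v (f t)) t) (hg : ∀ t ∈ s, HasDerivAt g (v (g t)) t)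
    (ht₀ : t₀ ∈ s) (heq : f t₀ = g t₀) : EqOn f g s := by
  have hlocal : ∀ t ∈ s, f t = g t → f =ᶠ[𝓝 t] g := fun t ht ↦
    ODE_solution_eventuallyEq_of_contDiffAt (hv t ht)
      (eventually_of_mem (hso.mem_nhds ht) hf) (eventually_of_mem (hso.mem_nhds ht) hg)
  suffices s ⊆ {t | f =ᶠ[𝓝 t] g} from fun t ht ↦ (this ht).self_of_nhds
  refine hs.subset_of_closure_inter_subset isOpen_setOfPred_eventually_nhds
    ⟨t₀, ht₀, hlocal t₀ ht₀ heq⟩ fun t ⟨htu, hts⟩ ↦ hlocal t hts ?_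
  by_contra hne
  have hsep : ∀ᶠ x in 𝓝 t, f x - g x ≠ 0 :=
    ((hf t hts).continuousAt.sub (hg t hts).continuousAt).eventually_ne (sub_ne_zero.2 hne)
  obtain ⟨x, hx, hxu⟩ := (hsep.and_frequently (mem_closure_iff_frequently.1 htu)).exists
  exact hx (sub_eq_zero.2 hxu.self_of_nhds)

end ODE

theorem intervalIntegral.integral_eq_zero_of_apply_add_sub_eq_neg {E : Type*}
    [NormedAddCommGroup E] [NormedSpace ℝ E] {f : ℝ → E} {a b : ℝ}
    (hf : ∀ x ∈ uIcc a b, f (a + b - x) = -f x) : ∫ x in a..b, f x = 0 := by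
  have hreflect : ∫ x in a..b, f (a + b - x) = ∫ x in a..b, f x := by
    simp [integral_comp_sub_left]
  rw [integral_congr hf, integral_neg] at hreflect
  have := IsAddTorsionFree.of_isTorsionFree ℝ E
  exact self_eq_neg.1 hreflect.symm

/-- The Euler ODE as a first-order system for `(ψ, ψ')`, solved for `ψ''`. -/
noncomputable def eulerField (lam P : ℝ) (p : ℝ × ℝ) : ℝ × ℝ :=
  (p.2, ((lam - 1) * p.2 ^ 2 - lam ^ 2 * p.1 ^ 2 + 2 * (lam - 1) * P) / (lam * p.1))

theorem contDiffAt_eulerField {lam P : ℝ} {p : ℝ × ℝ} (hlam : lam ≠ 0) (hp : p.1 ≠ 0) :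
    ContDiffAt ℝ 1 (eulerField lam P) p :=
  contDiffAt_snd.prodMk <| ContDiffAt.div (by fun_prop) (by fun_prop) (mul_ne_zero hlam hp)

theorem eulerField_eq {lam P x v w : ℝ} (hlam : lam ≠ 0) (hx : x ≠ 0)
    (hode : 2 * (lam - 1) * P = -(lam - 1) * v ^ 2 + lam ^ 2 * x ^ 2 + lam * w * x) :
    eulerField lam P (x, v) = (v, w) := by
  simp only [eulerField, Prod.mk.injEq, true_and]
  rw [div_eq_iff (mul_ne_zero hlam hx)]
  linarith

structure IsLocalSolution (lam P a b : ℝ) (ψ ψ' ψ'' : ℝ → ℝ) : Prop where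
  lt : a < b
  continuousOn : ContinuousOn ψ (Icc a b)
  left : ψ a = 0
  right : ψ b = 0
  pos : ∀ θ ∈ Ioo a b, 0 < ψ θ
  hasDerivAt : ∀ θ ∈ Ioo a b, HasDerivAt ψ (ψ' θ) θ
  hasDerivAt_deriv : ∀ θ ∈ Ioo a b, HasDerivAt ψ' (ψ'' θ) θ
  ode : ∀ θ ∈ Ioo a b, 2 * (lam - 1) * P =
    -(lam - 1) * (ψ' θ) ^ 2 + lam ^ 2 * (ψ θ) ^ 2 + lam * (ψ'' θ) * (ψ θ)

namespace IsLocalSolution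

variable {lam P a b : ℝ} {ψ ψ' ψ'' : ℝ → ℝ}

theorem hasDerivAt_phase (h : IsLocalSolution lam P a b ψ ψ' ψ'') (hlam : lam ≠ 0) {θ : ℝ}
    (hθ : θ ∈ Ioo a b) :
    HasDerivAt (fun t ↦ (ψ t, ψ' t)) (eulerField lam P (ψ θ, ψ' θ)) θ := by
  rw [eulerField_eq hlam (h.pos θ hθ).ne' (h.ode θ hθ)]
  exact (h.hasDerivAt θ hθ).prodMk (h.hasDerivAt_deriv θ hθ)

/-- The ODE only involves `ψ'²` and `ψ''`, so it is invariant under `θ ↦ 2m - θ`. -/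
theorem hasDerivAt_phase_reflect (h : IsLocalSolution lam P a b ψ ψ' ψ'') (hlam : lam ≠ 0)
    (m : ℝ) {θ : ℝ} (hθ : 2 * m - θ ∈ Ioo a b) :
    HasDerivAt (fun t ↦ (ψ (2 * m - t), -ψ' (2 * m - t)))
      (eulerField lam P (ψ (2 * m - θ), -ψ' (2 * m - θ))) θ := by
  have hode := h.ode _ hθ
  rw [← neg_sq] at hode
  rw [eulerField_eq hlam (h.pos _ hθ).ne' (w := ψ'' (2 * m - θ)) (by linarith)]
  simpa using ((h.hasDerivAt _ hθ).comp_const_sub (2 * m) θ).prodMk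
    ((h.hasDerivAt_deriv _ hθ).comp_const_sub (2 * m) θ).neg

theorem phase_eqOn_reflect (h : IsLocalSolution lam P a b ψ ψ' ψ'') (hlam : lam ≠ 0) {m : ℝ}
    (hm : m ∈ Ioo a b) (hm' : ψ' m = 0) :
    EqOn (fun t ↦ (ψ t, ψ' t)) (fun t ↦ (ψ (2 * m - t), -ψ' (2 * m - t)))
      (Ioo (max a (2 * m - b)) (min b (2 * m - a))) := by
  have hmem : ∀ t ∈ Ioo (max a (2 * m - b)) (min b (2 * m - a)),
      t ∈ Ioo a b ∧ 2 * m - t ∈ Ioo a b := by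
    intro t ht
    simp only [mem_Ioo, max_lt_iff, lt_min_iff] at ht ⊢
    constructor <;> constructor <;> linarith
  refine ODE_solution_eqOn_of_contDiffAt isPreconnected_Ioo isOpen_Ioo
    (fun t ht ↦ contDiffAt_eulerField hlam (h.pos t (hmem t ht).1).ne')
    (fun t ht ↦ h.hasDerivAt_phase hlam (hmem t ht).1)
    (fun t ht ↦ h.hasDerivAt_phase_reflect hlam m (hmem t ht).2) (t₀ := m) ?_
    (by simp [two_mul, hm'])
  simp only [mem_Ioo, max_lt_iff, lt_min_iff]
  constructor <;> constructor <;> linarith [hm.1, hm.2]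

theorem eqOn_reflect (h : IsLocalSolution lam P a b ψ ψ' ψ'') (hlam : lam ≠ 0) {m : ℝ}
    (hm : m ∈ Ioo a b) (hm' : ψ' m = 0) :
    EqOn ψ (fun t ↦ ψ (2 * m - t)) (Icc (max a (2 * m - b)) (min b (2 * m - a))) := by
  have hsub : Icc (max a (2 * m - b)) (min b (2 * m - a)) ⊆ Icc a b :=
    Icc_subset_Icc (le_max_left _ _) (min_le_left _ _)
  have hmaps : MapsTo (fun t ↦ 2 * m - t) (Icc (max a (2 * m - b)) (min b (2 * m - a)))
      (Icc a b) := by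
    intro t ht
    simp only [mem_Icc, max_le_iff, le_min_iff] at ht ⊢
    constructor <;> linarith
  have hlt : max a (2 * m - b) < min b (2 * m - a) := by
    simp only [max_lt_iff, lt_min_iff]
    refine ⟨⟨h.lt, ?_⟩, ?_, ?_⟩ <;> linarith [hm.1, hm.2]
  refine EqOn.of_subset_closure (fun t ht ↦ congrArg Prod.fst (h.phase_eqOn_reflect hlam hm hm' ht))
    (h.continuousOn.mono hsub) (h.continuousOn.comp (by fun_prop) hmaps) Ioo_subset_Icc_self ?_
  rw [closure_Ioo hlt.ne]

theorem eq_midpoint_of_deriv_eq_zero (h : IsLocalSolution lam P a b ψ ψ' ψ'') (hlam : lam ≠ 0)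
    {m : ℝ} (hm : m ∈ Ioo a b) (hm' : ψ' m = 0) : m = (a + b) / 2 := by
  have hsymm := h.eqOn_reflect hlam hm hm'
  rcases lt_trichotomy m ((a + b) / 2) with hlt | heq | hgt
  · have hψ := hsymm ⟨max_le le_rfl (by linarith), le_min h.lt.le (by linarith [hm.1])⟩
    have hpos := h.pos (2 * m - a) ⟨by linarith [hm.1], by linarith⟩
    simp only [h.left] at hψ
    linarith
  · exact heq
  · have hψ := hsymm ⟨max_le h.lt.le (by linarith [hm.2]), le_min le_rfl (by linarith)⟩
    have hpos := h.pos (2 * m - b) ⟨by linarith, by linarith [hm.2]⟩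
    simp only [h.right] at hψ
    linarith

theorem midpoint_mem (h : IsLocalSolution lam P a b ψ ψ' ψ'') : (a + b) / 2 ∈ Ioo a b :=
  ⟨by linarith [h.lt], by linarith [h.lt]⟩

theorem deriv_midpoint_eq_zero (h : IsLocalSolution lam P a b ψ ψ' ψ'') (hlam : lam ≠ 0) :
    ψ' ((a + b) / 2) = 0 := by
  obtain ⟨m, hm, hm'⟩ := exists_hasDerivAt_eq_zero h.lt h.continuousOn
    (h.left.trans h.right.symm) h.hasDerivAt
  rwa [← h.eq_midpoint_of_deriv_eq_zero hlam hm hm']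

theorem apply_add_sub (h : IsLocalSolution lam P a b ψ ψ' ψ'') (hlam : lam ≠ 0) {θ : ℝ}
    (hθ : θ ∈ Icc a b) : ψ (a + b - θ) = ψ θ := by
  have hsymm := h.eqOn_reflect hlam h.midpoint_mem (h.deriv_midpoint_eq_zero hlam)
  rw [mul_div_cancel₀ _ two_ne_zero, add_sub_cancel_left, add_sub_cancel_right, max_self,
    min_self] at hsymm
  exact (hsymm hθ).symm

theorem deriv_add_sub (h : IsLocalSolution lam P a b ψ ψ' ψ'') (hlam : lam ≠ 0) {θ : ℝ}
    (hθ : θ ∈ Ioo a b) : ψ' (a + b - θ) = -ψ' θ := by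
  have hsymm := h.phase_eqOn_reflect hlam h.midpoint_mem (h.deriv_midpoint_eq_zero hlam)
  rw [mul_div_cancel₀ _ two_ne_zero, add_sub_cancel_left, add_sub_cancel_right, max_self,
    min_self] at hsymm
  have hθ' : ψ' θ = -ψ' (a + b - θ) := congrArg Prod.snd (hsymm hθ)
  rw [hθ', neg_neg]

end IsLocalSolution

/-- Every local solution `(ψ, (a,b))` of the homogeneous Euler ODE is symmetric
about the midpoint `c = (a+b)/2` of its life-time, `c` is the unique critical point of `ψ` in
`(a,b)`, and consequently the energy-flux integral `∫ ψ'³` over any symmetric subinterval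
`(a+ε, b-ε)` vanishes — in particular for the Onsager-critical case `λ = 2/3`. -/
theorem local_solution_symmetry_and_zero_flux
    (lam P : ℝ) (hlam : 0 < lam)
    (a b : ℝ) (hab : a < b) (ψ ψ' ψ'' : ℝ → ℝ)
    (hcont : ContinuousOn ψ (Set.Icc a b))
    (ha : ψ a = 0) (hb : ψ b = 0)
    (hpos : ∀ θ ∈ Set.Ioo a b, 0 < ψ θ)
    (hd1 : ∀ θ ∈ Set.Ioo a b, HasDerivAt ψ (ψ' θ) θ)
    (hd2 : ∀ θ ∈ Set.Ioo a b, HasDerivAt ψ' (ψ'' θ) θ)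
    (hode : ∀ θ ∈ Set.Ioo a b, 2 * (lam - 1) * P =
      -(lam - 1) * (ψ' θ) ^ 2 + lam ^ 2 * (ψ θ) ^ 2 + lam * (ψ'' θ) * (ψ θ)) :
    (∀ s ∈ Set.Icc (0 : ℝ) ((b - a) / 2),
      ψ ((a + b) / 2 + s) = ψ ((a + b) / 2 - s)) ∧
    (∀ θ ∈ Set.Ioo a b, ψ' θ = 0 → θ = (a + b) / 2) ∧
    (∀ ε ∈ Set.Ioo (0 : ℝ) ((b - a) / 2),
      ∫ θ in (a + ε)..(b - ε), (ψ' θ) ^ 3 = 0) := by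
  have h : IsLocalSolution lam P a b ψ ψ' ψ'' := ⟨hab, hcont, ha, hb, hpos, hd1, hd2, hode⟩
  refine ⟨fun s ⟨hs₀, hs⟩ ↦ ?_, fun θ hθ hθ' ↦ h.eq_midpoint_of_deriv_eq_zero hlam.ne' hθ hθ',
    fun ε ⟨hε₀, hε⟩ ↦ ?_⟩
  · rw [← h.apply_add_sub hlam.ne' ⟨by linarith, by linarith⟩]
    congr 1
    ring
  · refine intervalIntegral.integral_eq_zero_of_apply_add_sub_eq_neg fun θ hθ ↦ ?_
    rw [uIcc_of_le (by linarith)] at hθ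
    rw [show a + ε + (b - ε) - θ = a + b - θ by ring,
      h.deriv_add_sub hlam.ne' ⟨by linarith [hθ.1], by linarith [hθ.2]⟩]
    ring
end
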